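/- arXiv:1205.5819 — 12 statements merged into one kernel-verified Lean document; each statement's English description precedes it below -/
import Mathlib

section
/- Let (X, 𝒞) be a finite concept space with VC dimension d, and let x ∈ X. Then the number of concepts C ∈ 𝒞 such that x ∈ C and C \ {x} ∈ 𝒞 is at most Σ_{i=0}^{d-1} binom(|X|-1, i) (this sum being 0 when d = 0). -/
open Set MeasureTheory Filter

/-- `A` is shattered by the concept class `𝒞`: `{C ∩ A : C ∈ 𝒞} = 2^A`. -/
def Shatters {X : Type*} (𝒞 : Set (Set X)) (A : Set X) : Prop :=
  (fun C => C ∩ A) '' 𝒞 = 𝒫 A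

/-- The VC dimension of a concept class: the supremum (in `ℕ∞`) of the cardinalities
of finite shattered subsets. -/
noncomputable def vcDim {X : Type*} (𝒞 : Set (Set X)) : ℕ∞ :=
  ⨆ (A : Finset X) (_ : Shatters 𝒞 ↑A), (A.card : ℕ∞)

lemma shatters_iff' {X : Type*} (𝒞 : Set (Set X)) (A : Set X) :
    Shatters 𝒞 A ↔ ∀ B ⊆ A, ∃ C ∈ 𝒞, C ∩ A = B := by
  constructor
  · intro h B hB
    have : B ∈ 𝒫 A := hB
    rw [← h] at this
    obtain ⟨C, hC, hCB⟩ := this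
    exact ⟨C, hC, hCB⟩
  · intro h
    ext B
    simp only [Set.mem_image, Set.mem_powerset_iff]
    constructor
    · rintro ⟨C, _, rfl⟩; exact Set.inter_subset_right
    · intro hB
      obtain ⟨C, hC, hCB⟩ := h B hB
      exact ⟨C, hC, hCB⟩

lemma card_le_of_shatters {X : Type*} {𝒞 : Set (Set X)} {d : ℕ}
    (hvc : vcDim 𝒞 = (d : ℕ∞)) (A : Finset X) (hA : Shatters 𝒞 ↑A) :
    A.card ≤ d := by
  have : (A.card : ℕ∞) ≤ vcDim 𝒞 :=
    le_iSup₂ (f := fun (A : Finset X) (_ : Shatters 𝒞 (↑A : Set X)) => (A.card : ℕ∞)) A hA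
  rw [hvc, Nat.cast_le] at this
  exact this

/-- Lemma 1.2.7 (Welzl): in a finite concept space of VC dimension `d`, for any point
`x`, there are at most `∑_{i=0}^{d-1} binom(|X|-1, i)` concepts `C ∈ 𝒞` with `x ∈ C`
and `C \ {x} ∈ 𝒞`. -/
theorem stmt_0 {X : Type*} [Fintype X] (𝒞 : Set (Set X)) (d : ℕ)
    (hvc : vcDim 𝒞 = (d : ℕ∞)) (x : X) :
    {C | C ∈ 𝒞 ∧ x ∈ C ∧ C \ {x} ∈ 𝒞}.ncard ≤
      ∑ i ∈ Finset.range d, (Fintype.card X - 1).choose i := by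
  classical
  set S : Set (Set X) := {C | C ∈ 𝒞 ∧ x ∈ C ∧ C \ {x} ∈ 𝒞} with hS
  rcases S.eq_empty_or_nonempty with hSe | ⟨C₀, hC₀⟩
  · simp [hSe]
  -- d ≥ 1 since {x} is shattered
  have hd1 : 1 ≤ d := by
    have hsh : Shatters 𝒞 (↑({x} : Finset X)) := by
      rw [shatters_iff']
      intro B hB
      simp only [Finset.coe_singleton] at hB ⊢
      rcases Set.subset_singleton_iff_eq.1 hB with rfl | rfl
      · exact ⟨C₀ \ {x}, hC₀.2.2, by simp⟩
      · refine ⟨C₀, hC₀.1, ?_⟩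
        exact Set.inter_eq_right.2 (Set.singleton_subset_iff.2 hC₀.2.1)
    have := card_le_of_shatters hvc {x} hsh
    simpa using this
  -- the subtype
  set X' := {y : X // y ≠ x} with hX'
  have hcard' : Fintype.card X' = Fintype.card X - 1 := by
    have := Fintype.card_subtype_compl (fun y : X => y = x)
    simp only [Fintype.card_subtype_eq] at this
    exact this
  set f : Set X → Finset X' := fun C => Finset.univ.filter (fun y : X' => (y : X) ∈ C) with hf
  have hmemf : ∀ (C : Set X) (y : X'), y ∈ f C ↔ (y : X) ∈ C := by
    intro C y; simp [hf]
  have hfinj : S.InjOn f := by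
    intro C hC C' hC' heq
    ext z
    by_cases hz : z = x
    · subst hz; simp [hC.2.1, hC'.2.1]
    · have := congrArg (fun s => (⟨z, hz⟩ : X') ∈ s) heq
      simp only [hmemf, eq_iff_iff] at this
      exact this
  have hSfin : S.Finite := Set.toFinite S
  set 𝒜 : Finset (Finset X') := hSfin.toFinset.image f with h𝒜
  have hcard𝒜 : S.ncard = 𝒜.card := by
    rw [Set.ncard_eq_toFinset_card S hSfin, h𝒜,
      Finset.card_image_of_injOn (by rw [Set.Finite.coe_toFinset]; exact hfinj)]
  -- VC dimension of 𝒜 is at most d - 1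
  have hvc𝒜 : 𝒜.vcDim ≤ d - 1 := by
    refine Finset.sup_le ?_
    intro s hs
    rw [Finset.mem_shatterer] at hs
    -- lift s to insert x (s.image val)
    set t : Finset X := insert x (s.image Subtype.val) with ht
    have hxnot : x ∉ s.image Subtype.val := by
      simp only [Finset.mem_image]
      rintro ⟨y, hy, h⟩
      exact y.2 h
    have hcardt : t.card = s.card + 1 := by
      rw [ht, Finset.card_insert_of_notMem hxnot,
        Finset.card_image_of_injective _ Subtype.val_injective]
    have hshat : Shatters 𝒞 (↑t : Set X) := by
      rw [shatters_iff']
      intro B hB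
      have hsub : ∀ z ∈ B, z = x ∨ ∃ y : X', y ∈ s ∧ (y : X) = z := by
        intro z hz
        have := hB hz
        simp only [ht, Finset.coe_insert, Set.mem_insert_iff, Finset.coe_image,
          Set.mem_image, Finset.mem_coe] at this
        tauto
      obtain ⟨u, hu, hsu⟩ := hs (Finset.filter_subset (fun y : X' => (y : X) ∈ B) s)
      rw [h𝒜, Finset.mem_image] at hu
      obtain ⟨C, hCm, rfl⟩ := hu
      rw [Set.Finite.mem_toFinset] at hCm
      have hCmem : ∀ y : X', y ∈ s → ((y : X) ∈ C ↔ (y : X) ∈ B) := by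
        intro y hy
        constructor
        · intro h
          have : y ∈ s ∩ f C := Finset.mem_inter.2 ⟨hy, (hmemf C y).2 h⟩
          rw [hsu] at this
          exact (Finset.mem_filter.1 this).2
        · intro h
          have : y ∈ s ∩ f C := by rw [hsu]; exact Finset.mem_filter.2 ⟨hy, h⟩
          exact (hmemf C y).1 (Finset.mem_inter.1 this).2
      by_cases hxB : x ∈ B
      · refine ⟨C, hCm.1, ?_⟩
        ext z
        simp only [Set.mem_inter_iff, Finset.mem_coe]
        constructor
        · rintro ⟨hzC, hzt⟩
          rw [ht] at hzt
          rcases Finset.mem_insert.1 hzt with rfl | hzim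
          · exact hxB
          · obtain ⟨y, hy, rfl⟩ := Finset.mem_image.1 hzim
            exact (hCmem y hy).1 hzC
        · intro hzB
          refine ⟨?_, hB hzB⟩
          rcases hsub z hzB with rfl | ⟨y, hy, rfl⟩
          · exact hCm.2.1
          · exact (hCmem y hy).2 hzB
      · refine ⟨C \ {x}, hCm.2.2, ?_⟩
        ext z
        simp only [Set.mem_inter_iff, Set.mem_diff, Set.mem_singleton_iff, Finset.mem_coe]
        constructor
        · rintro ⟨⟨hzC, hzx⟩, hzt⟩
          rw [ht] at hzt
          rcases Finset.mem_insert.1 hzt with rfl | hzim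
          · exact absurd rfl hzx
          · obtain ⟨y, hy, rfl⟩ := Finset.mem_image.1 hzim
            exact (hCmem y hy).1 hzC
        · intro hzB
          have hzx : z ≠ x := fun h => hxB (h ▸ hzB)
          rcases hsub z hzB with rfl | ⟨y, hy, rfl⟩
          · exact absurd rfl hzx
          · exact ⟨⟨(hCmem y hy).2 hzB, hzx⟩, hB hzB⟩
    have := card_le_of_shatters hvc t hshat
    omega
  -- apply Sauer-Shelah
  calc S.ncard = 𝒜.card := hcard𝒜
    _ ≤ 𝒜.shatterer.card := Finset.card_le_card_shatterer 𝒜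
    _ ≤ ∑ k ∈ Finset.Iic 𝒜.vcDim, (Fintype.card X').choose k :=
        Finset.card_shatterer_le_sum_vcDim
    _ ≤ ∑ i ∈ Finset.range d, (Fintype.card X - 1).choose i := by
        rw [hcard']
        refine Finset.sum_le_sum_of_subset ?_
        intro k hk
        simp only [Finset.mem_Iic] at hk
        simp only [Finset.mem_range]
        omega
end

section
/- Let (X, 𝒞) be a finite concept space with VC dimension d. Then (X, 𝒞) is d-maximum if and only if |𝒞| = Σ_{i=0}^{d} binom(|X|, i). -/
open Set MeasureTheory Filter

/-- The concept class `𝒞` is `d`-maximum: for every finite `A ⊆ X`,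
`|𝒞 ⊓ A| = ∑_{i=0}^d binom(|A|, i)`. -/
def IsMaximum {X : Type*} (𝒞 : Set (Set X)) (d : ℕ) : Prop :=
  ∀ A : Set X, A.Finite →
    ((fun C => C ∩ A) '' 𝒞).ncard = ∑ i ∈ Finset.range (d + 1), A.ncard.choose i


private lemma card_powerset_filter {α : Type*} [DecidableEq α] (G : Finset α) (k : ℕ) :
    ((G.powerset).filter (fun S => S.card < k)).card = ∑ i ∈ Finset.range k, G.card.choose i := by
  have h : (G.powerset).filter (fun S => S.card < k)
      = (Finset.range k).biUnion (fun i => G.powersetCard i) := by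
    ext S
    simp only [Finset.mem_filter, Finset.mem_powerset, Finset.mem_biUnion, Finset.mem_range,
      Finset.mem_powersetCard]
    constructor
    · rintro ⟨h1, h2⟩; exact ⟨S.card, h2, h1, rfl⟩
    · rintro ⟨i, hi, h1, rfl⟩; exact ⟨h1, hi⟩
  rw [h, Finset.card_biUnion]
  · exact Finset.sum_congr rfl fun i _ => Finset.card_powersetCard i G
  · intro i _ j _ hij
    exact Finset.disjoint_left.2 fun S hS hS' => hij
      ((Finset.mem_powersetCard.1 hS).2.symm.trans (Finset.mem_powersetCard.1 hS').2)

private lemma sauer {α : Type*} [DecidableEq α] {G : Finset α} {𝒜 : Finset (Finset α)} {k : ℕ}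
    (hG : ∀ C ∈ 𝒜, C ⊆ G) (hd : ∀ S, 𝒜.Shatters S → S.card < k) :
    𝒜.card ≤ ∑ i ∈ Finset.range k, G.card.choose i := by
  calc 𝒜.card ≤ 𝒜.shatterer.card := Finset.card_le_card_shatterer 𝒜
    _ ≤ _ := by
      rw [← card_powerset_filter]
      apply Finset.card_le_card
      intro S hS
      rw [Finset.mem_shatterer] at hS
      obtain ⟨u, hu, hSu⟩ := hS.exists_superset
      exact Finset.mem_filter.2 ⟨Finset.mem_powerset.2 (hSu.trans (hG u hu)), hd S hS⟩

private lemma pascal_sum (d m : ℕ) :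
    ∑ i ∈ Finset.range (d+1), (m+1).choose i
      = ∑ i ∈ Finset.range (d+1), m.choose i + ∑ i ∈ Finset.range d, m.choose i := by
  induction d with
  | zero => simp
  | succ d ih =>
    rw [Finset.sum_range_succ, ih, Finset.sum_range_succ (f := fun i => m.choose i) (n := d + 1),
      Finset.sum_range_succ (f := fun i => m.choose i) (n := d), Nat.choose_succ_succ]
    ring

private lemma main_lemma {α : Type*} [DecidableEq α] (d : ℕ) :
    ∀ n : ℕ, ∀ (G : Finset α) (𝒜 : Finset (Finset α)), G.card = n →
      (∀ C ∈ 𝒜, C ⊆ G) → (∀ S, 𝒜.Shatters S → S.card ≤ d) →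
      𝒜.card = ∑ i ∈ Finset.range (d+1), n.choose i →
      ∀ A ⊆ G, (𝒜.image (· ∩ A)).card = ∑ i ∈ Finset.range (d+1), A.card.choose i := by
  intro n
  induction n using Nat.strong_induction_on with
  | _ n ih =>
    intro G 𝒜 hGn hG hvc hcard A hA
    by_cases hAG : A = G
    · subst hAG
      have himg : 𝒜.image (· ∩ A) = 𝒜 := by
        ext C
        simp only [Finset.mem_image]
        constructor
        · rintro ⟨D, hD, rfl⟩
          rwa [Finset.inter_eq_left.2 (hG D hD)]
        · intro hC
          exact ⟨C, hC, Finset.inter_eq_left.2 (hG C hC)⟩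
      rw [himg, hcard, hGn]
    · obtain ⟨x, hxG, hxA⟩ : ∃ x, x ∈ G ∧ x ∉ A := by
        by_contra h
        push_neg at h
        exact hAG (Finset.Subset.antisymm hA h)
      have hn1 : 1 ≤ n := hGn ▸ Finset.card_pos.2 ⟨x, hxG⟩
      set G' := G.erase x with hG'
      have hG'card : G'.card = n - 1 := by rw [hG', Finset.card_erase_of_mem hxG, hGn]
      set M := 𝒜.memberSubfamily x with hM
      set N := 𝒜.nonMemberSubfamily x with hN
      set 𝒜' := M ∪ N with h𝒜'
      -- 𝒜' is the restriction of 𝒜 to G'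
      have h𝒜'img : 𝒜' = 𝒜.image (· ∩ G') := by
        rw [h𝒜', Finset.memberSubfamily_union_nonMemberSubfamily]
        apply Finset.image_congr
        intro C hC
        have : C ⊆ G := hG C hC
        ext y
        simp only [hG', Finset.mem_erase, Finset.mem_inter]
        constructor
        · rintro ⟨hy1, hy2⟩; exact ⟨hy2, hy1, this hy2⟩
        · rintro ⟨hy1, hy2, _⟩; exact ⟨hy2, hy1⟩
      have h𝒜'sub : ∀ C ∈ 𝒜', C ⊆ G' := by
        intro C hC
        rcases Finset.mem_union.1 hC with h | h
        · rw [Finset.mem_memberSubfamily] at h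
          exact Finset.subset_erase.2 ⟨(Finset.subset_insert x C).trans (hG _ h.1), h.2⟩
        · rw [Finset.mem_nonMemberSubfamily] at h
          exact Finset.subset_erase.2 ⟨hG _ h.1, h.2⟩
      -- no member of 𝒜' contains x
      have hx𝒜' : ∀ C ∈ 𝒜', x ∉ C := fun C hC hx =>
        (Finset.mem_erase.1 (h𝒜'sub C hC hx)).1 rfl
      -- shattered sets of 𝒜' are shattered by 𝒜
      have hvc' : ∀ S, 𝒜'.Shatters S → S.card ≤ d := by
        intro S hS
        obtain ⟨u, hu, hSu⟩ := hS.exists_superset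
        have hxS : x ∉ S := fun hx => hx𝒜' u hu (hSu hx)
        refine hvc S (fun t ht => ?_)
        obtain ⟨v, hv, hvt⟩ := hS ht
        rcases Finset.mem_union.1 hv with h | h
        · rw [Finset.mem_memberSubfamily] at h
          refine ⟨insert x v, h.1, ?_⟩
          rw [Finset.inter_insert_of_notMem hxS, hvt]
        · rw [Finset.mem_nonMemberSubfamily] at h
          exact ⟨v, h.1, hvt⟩
      -- shattered sets of M ∩ N have card < d
      have hvcL : ∀ S, (M ∩ N).Shatters S → S.card < d := by
        intro S hS
        obtain ⟨u, hu, hSu⟩ := hS.exists_superset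
        have hxu : x ∉ u := (Finset.mem_memberSubfamily.1 (Finset.mem_inter.1 hu).1).2
        have hxS : x ∉ S := fun hx => hxu (hSu hx)
        have : (insert x S).card ≤ d := by
          refine hvc (insert x S) (fun t ht => ?_)
          have ht' : t.erase x ⊆ S := by
            intro y hy
            rcases Finset.mem_insert.1 (ht (Finset.mem_of_mem_erase hy)) with rfl | h
            · exact absurd rfl (Finset.mem_erase.1 hy).1
            · exact h
          obtain ⟨v, hv, hvt⟩ := hS ht'
          have hv𝒜 : v ∈ 𝒜 := (Finset.mem_nonMemberSubfamily.1 (Finset.mem_inter.1 hv).2).1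
          have hiv𝒜 : insert x v ∈ 𝒜 :=
            (Finset.mem_memberSubfamily.1 (Finset.mem_inter.1 hv).1).1
          have hxv : x ∉ v := (Finset.mem_memberSubfamily.1 (Finset.mem_inter.1 hv).1).2
          by_cases hxt : x ∈ t
          · refine ⟨insert x v, hiv𝒜, ?_⟩
            have hins : (insert x S) ∩ (insert x v) = insert x (S ∩ v) := by
              ext y
              simp only [Finset.mem_inter, Finset.mem_insert]
              tauto
            rw [hins, hvt, Finset.insert_erase hxt]
          · refine ⟨v, hv𝒜, ?_⟩
            rw [Finset.insert_inter_of_notMem hxv, hvt, Finset.erase_eq_of_notMem hxt]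
        rw [Finset.card_insert_of_notMem hxS] at this
        omega
      -- cardinality split
      have hsplit : 𝒜'.card + (M ∩ N).card = 𝒜.card := by
        rw [h𝒜', Finset.card_union_add_card_inter,
          Finset.card_memberSubfamily_add_card_nonMemberSubfamily]
      -- Sauer bounds
      have h1 : 𝒜'.card ≤ ∑ i ∈ Finset.range (d+1), (n-1).choose i := by
        have := sauer (G := G') h𝒜'sub (k := d + 1) (fun S hS => Nat.lt_succ_of_le (hvc' S hS))
        rwa [hG'card] at this
      have h2 : (M ∩ N).card ≤ ∑ i ∈ Finset.range d, (n-1).choose i := by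
        have := sauer (G := G') (fun C hC => h𝒜'sub C
          (Finset.mem_union_left _ (Finset.mem_inter.1 hC).1)) (k := d) hvcL
        rwa [hG'card] at this
      -- Pascal
      have hpas : ∑ i ∈ Finset.range (d+1), n.choose i
          = ∑ i ∈ Finset.range (d+1), (n-1).choose i + ∑ i ∈ Finset.range d, (n-1).choose i := by
        obtain ⟨m, rfl⟩ : ∃ m, n = m + 1 := ⟨n - 1, by omega⟩
        simpa using pascal_sum d m
      have hA'card : 𝒜'.card = ∑ i ∈ Finset.range (d+1), (n-1).choose i := by omega
      have hAG' : A ⊆ G' := Finset.subset_erase.2 ⟨hA, hxA⟩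
      have := ih (n-1) (by omega) G' 𝒜' hG'card h𝒜'sub hvc' hA'card A hAG'
      rw [← this, h𝒜'img, Finset.image_image]
      congr 1
      apply Finset.image_congr
      intro C _
      simp only [Function.comp_apply]
      rw [Finset.inter_assoc, Finset.inter_eq_right.2 hAG']

/-- Theorem 1.2.8 (Welzl): a finite concept space of VC dimension `d` is `d`-maximum
iff `|𝒞| = ∑_{i=0}^d binom(|X|, i)`. -/
theorem stmt_1 {X : Type*} [Fintype X] (𝒞 : Set (Set X)) (d : ℕ)
    (hvc : vcDim 𝒞 = (d : ℕ∞)) :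
    IsMaximum 𝒞 d ↔ 𝒞.ncard = ∑ i ∈ Finset.range (d + 1), (Fintype.card X).choose i := by
  classical
  constructor
  · intro h
    have h1 := h Set.univ Set.finite_univ
    have h2 : ((fun C => C ∩ Set.univ) '' 𝒞) = 𝒞 := by simp
    rwa [h2, Set.ncard_univ, Nat.card_eq_fintype_card] at h1
  · intro hcard
    set φ : Set X → Finset X := fun C => (Set.toFinite C).toFinset with hφ
    have hφcoe : ∀ C : Set X, (φ C : Set X) = C := fun C => Set.Finite.coe_toFinset _
    have hφinj : Function.Injective φ := fun C D h => by
      rw [← hφcoe C, ← hφcoe D, h]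
    have hfin : 𝒞.Finite := Set.toFinite 𝒞
    set F : Finset (Finset X) := hfin.toFinset.image φ with hF
    have hFcard : F.card = 𝒞.ncard := by
      rw [hF, Finset.card_image_of_injective _ hφinj, ← Set.ncard_eq_toFinset_card]
    have hmemF : ∀ u, u ∈ F ↔ ∃ C ∈ 𝒞, φ C = u := by
      intro u
      simp only [hF, Finset.mem_image, hfin.mem_toFinset]
    have hvcF : ∀ S : Finset X, F.Shatters S → S.card ≤ d := by
      intro S hS
      have hSh : Shatters 𝒞 ↑S := by
        apply Set.Subset.antisymm
        · rintro T ⟨C, hC, rfl⟩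
          exact Set.inter_subset_right
        · intro T hT
          have hTS : T ⊆ ↑S := hT
          have hTfin : T.Finite := Set.Finite.subset (Finset.finite_toSet S) hTS
          have htsub : hTfin.toFinset ⊆ S := by
            rw [← Finset.coe_subset, hTfin.coe_toFinset]
            exact hTS
          obtain ⟨u, hu, hSu⟩ := hS htsub
          obtain ⟨C, hC, rfl⟩ := (hmemF u).1 hu
          refine ⟨C, hC, ?_⟩
          show C ∩ ↑S = T
          have h3 : C ∩ ↑S = ↑(S ∩ φ C) := by
            rw [Finset.coe_inter, hφcoe, Set.inter_comm]
          rw [h3, hSu, hTfin.coe_toFinset]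
      have h4 : (S.card : ℕ∞) ≤ (d : ℕ∞) := by
        rw [← hvc]
        exact le_iSup₂ (f := fun (A : Finset X) (_ : Shatters 𝒞 ↑A) => (A.card : ℕ∞)) S hSh
      exact_mod_cast h4
    have hFcard' : F.card = ∑ i ∈ Finset.range (d + 1), (Fintype.card X).choose i := by
      rw [hFcard, hcard]
    intro A hAfin
    have key := main_lemma d (Fintype.card X) Finset.univ F Finset.card_univ
      (fun C _ => Finset.subset_univ C) hvcF hFcard' hAfin.toFinset (Finset.subset_univ _)
    have hφinter : ∀ C : Set X, φ (C ∩ A) = φ C ∩ hAfin.toFinset := by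
      intro C
      apply Finset.coe_injective
      rw [Finset.coe_inter, hφcoe, hφcoe, hAfin.coe_toFinset]
    have himgfin : ((fun C => C ∩ A) '' 𝒞).Finite := Set.toFinite _
    have himg : F.image (· ∩ hAfin.toFinset) = himgfin.toFinset.image φ := by
      ext u
      simp only [Finset.mem_image, himgfin.mem_toFinset, Set.mem_image]
      constructor
      · rintro ⟨v, hv, rfl⟩
        obtain ⟨C, hC, rfl⟩ := (hmemF v).1 hv
        exact ⟨C ∩ A, ⟨C, hC, rfl⟩, hφinter C⟩
      · rintro ⟨T, ⟨C, hC, rfl⟩, rfl⟩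
        exact ⟨φ C, (hmemF _).2 ⟨C, hC, rfl⟩, (hφinter C).symm⟩
    have hAcard : hAfin.toFinset.card = A.ncard := (Set.ncard_eq_toFinset_card A hAfin).symm
    calc ((fun C => C ∩ A) '' 𝒞).ncard = himgfin.toFinset.card :=
          Set.ncard_eq_toFinset_card _ himgfin
      _ = (himgfin.toFinset.image φ).card :=
          (Finset.card_image_of_injective _ hφinj).symm
      _ = (F.image (· ∩ hAfin.toFinset)).card := by rw [himg]
      _ = ∑ i ∈ Finset.range (d + 1), A.ncard.choose i := by rw [key, hAcard]
end

section
/- A concept space (X, 𝒞) has finite VC dimension if and only if its dual concept space has finite VC dimension. -/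
open Set MeasureTheory Filter

/-- The concept class of the dual concept space of `(X, 𝒞)`: the domain is `𝒞`
and the concepts are the sets `{C ∈ 𝒞 : x ∈ C}` for `x ∈ X`. -/
def dualClass {X : Type*} (𝒞 : Set (Set X)) : Set (Set ↥𝒞) :=
  Set.range fun x : X => {C : ↥𝒞 | x ∈ (C : Set X)}

/-- Relation form of shattering. -/
def ShRel {α β : Type*} (r : α → β → Prop) (B : Finset β) : Prop :=
  ∀ S ⊆ B, ∃ a, ∀ b ∈ B, (r a b ↔ b ∈ S)

lemma key_lemma {α β : Type*} (r : α → β → Prop) (B : Finset β) (n : ℕ)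
    (hB : 2 ^ n ≤ B.card) (hsh : ShRel r B) :
    ∃ A : Finset α, A.card = n ∧ ShRel (fun b a => r a b) A := by
  classical
  obtain ⟨f⟩ : Nonempty (Finset (Fin n) ↪ ↥B) := by
    apply Function.Embedding.nonempty_of_card_le
    simpa using hB
  have hfinj : Function.Injective (fun T : Finset (Fin n) => (f T : β)) :=
    fun T T' h => f.injective (Subtype.ext h)
  have hfB : ∀ T, ((f T : β)) ∈ B := fun T => (f T).2
  -- choose witnesses
  have hx : ∀ i : Fin n, ∃ a, ∀ T : Finset (Fin n), (r a (f T : β) ↔ i ∈ T) := by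
    intro i
    obtain ⟨a, ha⟩ := hsh ((Finset.univ.filter (fun T : Finset (Fin n) => i ∈ T)).image
      (fun T => (f T : β)))
      (by intro b hb; simp only [Finset.mem_image] at hb; obtain ⟨T, _, rfl⟩ := hb; exact hfB T)
    refine ⟨a, fun T => ?_⟩
    rw [ha _ (hfB T)]
    constructor
    · rintro h
      simp only [Finset.mem_image, Finset.mem_filter, Finset.mem_univ, true_and] at h
      obtain ⟨T', hiT', hTT'⟩ := h
      exact (hfinj hTT') ▸ hiT'
    · intro h
      simp only [Finset.mem_image, Finset.mem_filter, Finset.mem_univ, true_and]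
      exact ⟨T, h, rfl⟩
  choose x hxspec using hx
  have hxinj : Function.Injective x := by
    intro i j hij
    by_contra hne
    have h1 : r (x i) (f {i} : β) := (hxspec i {i}).2 (Finset.mem_singleton_self i)
    rw [hij] at h1
    have h2 := (hxspec j {i}).1 h1
    simp only [Finset.mem_singleton] at h2
    exact hne (h2.symm)
  refine ⟨Finset.univ.image x, by rw [Finset.card_image_of_injective _ hxinj]; simp, ?_⟩
  intro T hT
  refine ⟨(f (Finset.univ.filter (fun i => x i ∈ T)) : β), ?_⟩
  intro a ha
  simp only [Finset.mem_image, Finset.mem_univ, true_and] at ha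
  obtain ⟨i, rfl⟩ := ha
  show r (x i) _ ↔ _
  rw [hxspec i]
  simp

lemma shatters_finset_iff {Y : Type*} (𝒟 : Set (Set Y)) (A : Finset Y) :
    Shatters 𝒟 ↑A ↔ ∀ S ⊆ A, ∃ D ∈ 𝒟, ∀ b ∈ A, (b ∈ D ↔ b ∈ S) := by
  classical
  constructor
  · intro h S hS
    have : (↑S : Set Y) ∈ 𝒫 (↑A : Set Y) := by
      simp only [mem_powerset_iff]; exact_mod_cast hS
    rw [← h] at this
    obtain ⟨D, hD, hDS⟩ := this
    simp only at hDS
    refine ⟨D, hD, fun b hb => ?_⟩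
    constructor
    · intro hbD
      have : b ∈ D ∩ (↑A : Set Y) := ⟨hbD, by exact_mod_cast hb⟩
      rw [hDS] at this; exact_mod_cast this
    · intro hbS
      have : b ∈ (↑S : Set Y) := by exact_mod_cast hbS
      rw [← hDS] at this; exact this.1
  · intro h
    apply Set.eq_of_subset_of_subset
    · rintro _ ⟨D, _, rfl⟩
      simp only [mem_powerset_iff]
      exact inter_subset_right
    · intro S hS
      simp only [mem_powerset_iff] at hS
      obtain ⟨D, hD, hDS⟩ := h (A.filter (fun y => y ∈ S))
        (Finset.filter_subset _ _)
      refine ⟨D, hD, ?_⟩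
      ext b
      simp only [mem_inter_iff, Finset.coe_filter] at *
      constructor
      · rintro ⟨hbD, hbA⟩
        have := (hDS b (by exact_mod_cast hbA)).1 hbD
        simp only [Finset.mem_filter] at this
        exact this.2
      · intro hbS
        have hbA : b ∈ A := by exact_mod_cast hS hbS
        refine ⟨(hDS b hbA).2 ?_, by exact_mod_cast hbA⟩
        simp only [Finset.mem_filter]
        exact ⟨hbA, hbS⟩

lemma vcDim_lt_top_iff {Y : Type*} (𝒟 : Set (Set Y)) :
    vcDim 𝒟 < ⊤ ↔ ∃ n : ℕ, ∀ A : Finset Y, Shatters 𝒟 ↑A → A.card ≤ n := by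
  constructor
  · intro h
    obtain ⟨m, hm⟩ := WithTop.ne_top_iff_exists.mp h.ne
    refine ⟨m, fun A hA => ?_⟩
    have : (A.card : ℕ∞) ≤ vcDim 𝒟 := by
      unfold vcDim
      exact le_iSup₂_of_le A hA le_rfl
    rw [← hm] at this
    exact Nat.cast_le.mp this
  · rintro ⟨n, hn⟩
    have : vcDim 𝒟 ≤ (n : ℕ∞) := by
      unfold vcDim
      apply iSup₂_le
      intro A hA
      exact_mod_cast hn A hA
    exact lt_of_le_of_lt this (by simp [lt_top_iff_ne_top])

/-- Corollary 1.3.9: `𝒞` has finite VC dimension iff its dual class does. -/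
theorem stmt_5 {X : Type*} (𝒞 : Set (Set X)) :
    vcDim 𝒞 < ⊤ ↔ vcDim (dualClass 𝒞) < ⊤ := by
  classical
  -- translate both shattering notions into ShRel form
  have hprim : ∀ A : Finset X, Shatters 𝒞 ↑A ↔
      ShRel (fun (C : ↥𝒞) (x : X) => x ∈ (C : Set X)) A := by
    intro A
    rw [shatters_finset_iff]
    constructor
    · intro h S hS
      obtain ⟨D, hD, hDS⟩ := h S hS
      exact ⟨⟨D, hD⟩, hDS⟩
    · intro h S hS
      obtain ⟨⟨D, hD⟩, hDS⟩ := h S hS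
      exact ⟨D, hD, hDS⟩
  have hdual : ∀ B : Finset ↥𝒞, Shatters (dualClass 𝒞) ↑B ↔
      ShRel (fun (x : X) (C : ↥𝒞) => x ∈ (C : Set X)) B := by
    intro B
    rw [shatters_finset_iff]
    constructor
    · intro h S hS
      obtain ⟨D, hD, hDS⟩ := h S hS
      obtain ⟨x, rfl⟩ := hD
      exact ⟨x, hDS⟩
    · intro h S hS
      obtain ⟨x, hx⟩ := h S hS
      exact ⟨{C : ↥𝒞 | x ∈ (C : Set X)}, ⟨x, rfl⟩, hx⟩
  rw [vcDim_lt_top_iff, vcDim_lt_top_iff]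
  constructor
  · rintro ⟨d, hd⟩
    refine ⟨2 ^ (d + 1) - 1, fun B hB => ?_⟩
    by_contra hcard
    push_neg at hcard
    have h2 : 2 ^ (d + 1) ≤ B.card := by omega
    obtain ⟨A, hAcard, hAsh⟩ := key_lemma _ B (d + 1) h2 ((hdual B).mp hB)
    have := hd A ((hprim A).mpr hAsh)
    omega
  · rintro ⟨d, hd⟩
    refine ⟨2 ^ (d + 1) - 1, fun A hA => ?_⟩
    by_contra hcard
    push_neg at hcard
    have h2 : 2 ^ (d + 1) ≤ A.card := by omega
    obtain ⟨B, hBcard, hBsh⟩ := key_lemma _ A (d + 1) h2 ((hprim A).mp hA)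
    have := hd B ((hdual B).mpr hBsh)
    omega
end

section
/- (Compactness theorem for sample compression schemes.) A concept space (X, 𝒞) has an unlabelled sample compression scheme of size d if and only if every finite subspace (A, 𝒞 ⊓ A), for A ⊆ X finite, has an unlabelled sample compression scheme of size d. -/
open Set MeasureTheory Filter

/-- `H` is an unlabelled sample compression scheme of size `d` on `(X, 𝒞)`:
every finite sample of a concept is compressed to a subset of size at most `d`
whose hypothesis agrees with the concept on the sample. -/
def IsUnlabelledSCS {X : Type*} (𝒞 : Set (Set X)) (d : ℕ) (H : Set X → Set X) : Prop :=
  ∀ C ∈ 𝒞, ∀ A : Set X, A.Finite →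
    ∃ σ : Set X, σ ⊆ A ∧ σ.ncard ≤ d ∧ H σ ∩ A = C ∩ A

/-- The concept class of the subspace `(Y, 𝒞 ⊓ Y)`, as a class on the subtype `↥Y`. -/
def restrictClass {X : Type*} (𝒞 : Set (Set X)) (Y : Set X) : Set (Set ↥Y) :=
  (fun C => {y : ↥Y | (y : X) ∈ C}) '' 𝒞

/-- Theorem 2.2.1 (Compactness theorem, Ben-David–Litman): `(X, 𝒞)` has an unlabelled
sample compression scheme of size `d` iff every finite subspace does. -/
theorem stmt_8 {X : Type*} (𝒞 : Set (Set X)) (d : ℕ) :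
    (∃ H : Set X → Set X, IsUnlabelledSCS 𝒞 d H) ↔
      ∀ A : Set X, A.Finite →
        ∃ H : Set ↥A → Set ↥A, IsUnlabelledSCS (restrictClass 𝒞 A) d H := by
  classical
  constructor
  · rintro ⟨H, hH⟩ A hA
    refine ⟨fun σ' => {y | (y : X) ∈ H (Subtype.val '' σ')}, ?_⟩
    rintro C' ⟨C, hC, rfl⟩ B' hB'
    obtain ⟨σ, hσB, hσd, hσH⟩ := hH C hC (Subtype.val '' B') (hB'.image _)
    have hσr : σ ⊆ Set.range (Subtype.val : ↥A → X) :=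
      hσB.trans (image_subset_range _ _)
    have himg : Subtype.val '' (Subtype.val ⁻¹' σ : Set ↥A) = σ :=
      image_preimage_eq_of_subset hσr
    refine ⟨Subtype.val ⁻¹' σ, ?_, ?_, ?_⟩
    · intro y hy
      obtain ⟨z, hz, hzy⟩ := hσB hy
      rwa [show z = y from Subtype.val_injective hzy] at hz
    · rw [ncard_preimage_of_injective_subset_range Subtype.val_injective hσr]
      exact hσd
    · ext y
      simp only [mem_inter_iff, mem_setOf_eq, himg]
      constructor
      · rintro ⟨hy, hyB⟩
        have := hσH.le ⟨hy, mem_image_of_mem _ hyB⟩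
        exact ⟨this.1, hyB⟩
      · rintro ⟨hy, hyB⟩
        have := hσH.ge ⟨hy, mem_image_of_mem _ hyB⟩
        exact ⟨this.1, hyB⟩
  · intro h
    choose Hfin hHfin using fun (A : Finset X) => h ↑A A.finite_toSet
    set G : Finset X → Set X → Set X :=
      fun A σ => Subtype.val '' (Hfin A {y : ↥(↑A : Set X) | (y : X) ∈ σ}) with hG
    have key : ∀ (A : Finset X) (C : Set X), C ∈ 𝒞 → ∀ B : Set X, B.Finite → B ⊆ ↑A →
        ∃ σ : Set X, σ ⊆ B ∧ σ.ncard ≤ d ∧ G A σ ∩ B = C ∩ B := by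
      intro A C hC B hB hBA
      have hB' : ({y : ↥(↑A : Set X) | (y : X) ∈ B}).Finite := by
        apply hB.preimage
        exact Subtype.val_injective.injOn
      obtain ⟨σ', hσ'B, hσ'd, hσ'H⟩ :=
        hHfin A {y | (y : X) ∈ C} ⟨C, hC, rfl⟩ {y | (y : X) ∈ B} hB'
      refine ⟨Subtype.val '' σ', ?_, ?_, ?_⟩
      · rintro x ⟨y, hy, rfl⟩; exact hσ'B hy
      · rw [ncard_image_of_injective _ Subtype.val_injective]; exact hσ'd
      · have hpre : {y : ↥(↑A : Set X) | (y : X) ∈ Subtype.val '' σ'} = σ' := by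
          ext y
          simp only [mem_setOf_eq]
          constructor
          · rintro ⟨z, hz, hzy⟩
            rwa [show z = y from Subtype.val_injective hzy] at hz
          · exact fun hy => mem_image_of_mem _ hy
        have hGe : G A (Subtype.val '' σ') = Subtype.val '' (Hfin A σ') := by
          simp only [hG]; rw [hpre]
        rw [hGe]
        ext x
        simp only [mem_inter_iff, mem_image]
        constructor
        · rintro ⟨⟨y, hy, rfl⟩, hxB⟩
          exact ⟨(hσ'H.le ⟨hy, hxB⟩).1, hxB⟩
        · rintro ⟨hxC, hxB⟩
          exact ⟨⟨⟨x, hBA hxB⟩, (hσ'H.ge ⟨hxC, hxB⟩).1, rfl⟩, hxB⟩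
    let U : Ultrafilter (Finset X) := Ultrafilter.of atTop
    refine ⟨fun σ => {x | {A : Finset X | x ∈ G A σ} ∈ U}, ?_⟩
    intro C hC B hB
    set s : Finset X → Set X := fun A =>
      if hBA : B ⊆ ↑A then (key A C hC B hB hBA).choose else ∅ with hs
    have hsspec : ∀ A : Finset X, B ⊆ ↑A →
        s A ⊆ B ∧ (s A).ncard ≤ d ∧ G A (s A) ∩ B = C ∩ B := by
      intro A hBA
      simp only [hs, dif_pos hBA]
      exact (key A C hC B hB hBA).choose_spec
    have hT0 : {A : Finset X | B ⊆ ↑A} ∈ U := by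
      apply Ultrafilter.of_le
      have : {A : Finset X | hB.toFinset ≤ A} ∈ (atTop : Filter (Finset X)) :=
        mem_atTop _
      apply Filter.mem_of_superset this
      intro A hA
      simp only [mem_setOf_eq] at hA ⊢
      rw [← hB.coe_toFinset]
      exact_mod_cast hA
    have hpart : {A : Finset X | B ⊆ ↑A} ⊆
        ⋃ σ ∈ {t : Set X | t ⊆ B}, {A : Finset X | s A = σ ∧ B ⊆ ↑A} := by
      intro A hA
      exact mem_biUnion ((hsspec A hA).1) ⟨rfl, hA⟩
    have hmem : (⋃ σ ∈ {t : Set X | t ⊆ B}, {A : Finset X | s A = σ ∧ B ⊆ ↑A}) ∈ U :=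
      Filter.mem_of_superset hT0 hpart
    obtain ⟨σ, hσB, hTσ⟩ :=
      (Ultrafilter.finite_biUnion_mem_iff hB.finite_subsets).mp hmem
    obtain ⟨A₀, hA₀σ, hA₀B⟩ := Ultrafilter.nonempty_of_mem hTσ
    have hA₀ := hsspec A₀ hA₀B
    refine ⟨σ, hσB, by rw [← hA₀σ]; exact hA₀.2.1, ?_⟩
    ext x
    simp only [mem_inter_iff, mem_setOf_eq]
    constructor
    · rintro ⟨hx, hxB⟩
      refine ⟨?_, hxB⟩
      by_contra hxC
      have hne := Ultrafilter.nonempty_of_mem (U.inter_mem hx hTσ)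
      obtain ⟨A, hxA, hAσ, hAB⟩ := hne
      have := (hsspec A hAB).2.2
      rw [hAσ] at this
      exact hxC (this.le ⟨hxA, hxB⟩).1
    · rintro ⟨hxC, hxB⟩
      refine ⟨?_, hxB⟩
      apply U.toFilter.mem_of_superset hTσ
      rintro A ⟨hAσ, hAB⟩
      have := (hsspec A hAB).2.2
      rw [hAσ] at this
      exact (this.ge ⟨hxC, hxB⟩).1
end

section
/- If a concept space (X, 𝒞) has an unlabelled sample compression scheme of size d, then vc(𝒞) ≤ d. -/
open Set MeasureTheory Filter

/-- Proposition 2.3.1: a concept space with an unlabelled sample compression scheme of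
size `d` has VC dimension at most `d`. -/
theorem stmt_9 {X : Type*} (𝒞 : Set (Set X)) (d : ℕ)
    (h : ∃ H : Set X → Set X, IsUnlabelledSCS 𝒞 d H) :
    vcDim 𝒞 ≤ (d : ℕ∞) := by
  classical
  obtain ⟨H, hH⟩ := h
  rw [vcDim]
  refine iSup₂_le fun A hA => ?_
  rw [Nat.cast_le]
  by_contra hd
  push_neg at hd
  -- for each subset B of A, find a compressed finset
  have key : ∀ B ∈ A.powerset, ∃ σ : Finset X,
      σ ∈ A.powerset.filter (fun S => S.card ≤ d) ∧ (B : Set X) = H ↑σ ∩ ↑A := by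
    intro B hB
    rw [Finset.mem_powerset] at hB
    have hBin : (B : Set X) ∈ 𝒫 (A : Set X) := by
      simpa [Set.mem_powerset_iff] using (Finset.coe_subset.2 hB)
    rw [← hA] at hBin
    obtain ⟨C, hC, hCA⟩ := hBin
    obtain ⟨σ, hσA, hσcard, hσH⟩ := hH C hC ↑A (A.finite_toSet)
    have hσfin : σ.Finite := A.finite_toSet.subset hσA
    refine ⟨hσfin.toFinset, ?_, ?_⟩
    · rw [Finset.mem_filter, Finset.mem_powerset]
      constructor
      · intro x hx
        exact hσA (by simpa using hx)
      · rwa [← Set.ncard_coe_finset, hσfin.coe_toFinset]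
    · rw [hσfin.coe_toFinset, hσH]; exact by simpa using hCA.symm
  choose f hf1 hf2 using key
  have hinj : ∀ B₁ (h1 : B₁ ∈ A.powerset) B₂ (h2 : B₂ ∈ A.powerset),
      f B₁ h1 = f B₂ h2 → B₁ = B₂ := by
    intro B₁ h1 B₂ h2 heq
    have := hf2 B₁ h1
    rw [heq, ← hf2 B₂ h2] at this
    exact_mod_cast this
  have hcard : A.powerset.card ≤ (A.powerset.filter (fun S => S.card ≤ d)).card := by
    apply Finset.card_le_card_of_injOn (fun B => if hB : B ∈ A.powerset then f B hB else B)
    · intro B hB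
      simp only [Finset.mem_coe] at hB ⊢
      simp only [dif_pos hB]
      exact hf1 B hB
    · intro B₁ h1 B₂ h2 heq
      simp only [Finset.mem_coe] at h1 h2
      simp only [dif_pos h1, dif_pos h2] at heq
      exact hinj B₁ h1 B₂ h2 heq
  have hlt : (A.powerset.filter (fun S => S.card ≤ d)).card < A.powerset.card := by
    apply Finset.card_lt_card
    constructor
    · exact Finset.filter_subset _ _
    · intro hsub
      have := hsub (Finset.mem_powerset_self A)
      rw [Finset.mem_filter] at this
      omega
  omega
end

section
/- Let (X, 𝒞) be a concept space with |X| = m finite, suppose (X, 𝒞) has an unlabelled sample compression scheme of size d, and let k ≤ d. If n · Σ_{i=0}^{k} binom(m, i) ≥ Σ_{i=0}^{d} binom(m, i), then (X, 𝒞) has an n-copy unlabelled sample compression scheme of size k. -/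
open Set MeasureTheory Filter

/-- `H` is an `(ns i)`-copy unlabelled sample compression scheme of size `k` on `(X, 𝒞)`:
every finite sample of a concept is compressed to a pair `(σ, l)` with `σ` of size
`i ≤ k` and `l ∈ {1, …, ns i}` whose hypothesis `H σ l` agrees with the concept on
the sample. -/
def IsCopySCS {X : Type*} (𝒞 : Set (Set X)) (k : ℕ) (ns : ℕ → ℕ)
    (H : Set X → ℕ → Set X) : Prop :=
  ∀ C ∈ 𝒞, ∀ A : Set X, A.Finite →
    ∃ σ : Set X, σ ⊆ A ∧ σ.ncard ≤ k ∧
      ∃ l : ℕ, 1 ≤ l ∧ l ≤ ns σ.ncard ∧ H σ l ∩ A = C ∩ A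

open scoped FinsetFamily
open Finset in

private lemma my_ilym {α : Type*} [Fintype α] [DecidableEq α] {i : ℕ} (t : ℕ) (ht : t ≤ i)
    (𝒜 : Finset (Finset α)) (h𝒜 : (𝒜 : Set (Finset α)).Sized i) :
    (#𝒜 : ℚ) / (Fintype.card α).choose i ≤ #(∂^[t] 𝒜) / (Fintype.card α).choose (i - t) := by
  induction t with
  | zero => simp
  | succ t ih =>
    refine (ih (Nat.le_of_succ_le ht)).trans ?_
    rw [Function.iterate_succ_apply']
    have h2 : ((∂^[t] 𝒜 : Finset (Finset α)) : Set (Finset α)).Sized (i - t) :=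
      h𝒜.shadow_iterate
    have h3 := Finset.card_div_choose_le_card_shadow_div_choose (𝕜 := ℚ)
      (r := i - t) (by omega) h2
    rw [show i - (t + 1) = i - t - 1 by omega]; exact h3

open Finset in
private lemma my_core {α : Type*} [Fintype α] [DecidableEq α] {d k n : ℕ} (hk : k ≤ d)
    (hn : ∑ i ∈ Finset.range (d + 1), (Fintype.card α).choose i ≤
        n * ∑ i ∈ Finset.range (k + 1), (Fintype.card α).choose i)
    (F : Finset (Finset α)) (hF : ∀ s ∈ F, s.card ≤ d) :
    F.card ≤ n * (F.biUnion fun s => s.powerset.filter fun t => t.card ≤ k).card := by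
  set m := Fintype.card α with hm
  set D := F.biUnion fun s => s.powerset.filter fun t => t.card ≤ k with hD
  -- n ≥ 1
  have hSk1 : 1 ≤ ∑ i ∈ Finset.range (d + 1), m.choose i := by
    calc 1 = m.choose 0 := by simp
    _ ≤ _ := Finset.single_le_sum (f := fun i => m.choose i) (fun i _ => Nat.zero_le _)
        (Finset.mem_range.2 (Nat.succ_pos d))
  have hn1 : 1 ≤ n := by
    rcases Nat.eq_zero_or_pos n with h0 | h1
    · subst h0; rw [zero_mul] at hn; omega
    · exact h1
  have hDk : ∀ t ∈ D, t.card ≤ k := by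
    intro t ht
    obtain ⟨s, _, hts⟩ := Finset.mem_biUnion.1 ht
    exact (Finset.mem_filter.1 hts).2
  set f : ℕ → ℕ := fun i => #(F.filter fun s => s.card = i) with hf
  set dd : ℕ → ℕ := fun j => #(D.filter fun t => t.card = j) with hdd
  have hFsum : #F = ∑ i ∈ Finset.range (d + 1), f i :=
    Finset.card_eq_sum_card_fiberwise fun s hs => Finset.mem_range.2 (Nat.lt_succ_of_le (hF s hs))
  have hDsum : #D = ∑ j ∈ Finset.range (k + 1), dd j :=
    Finset.card_eq_sum_card_fiberwise fun t ht => Finset.mem_range.2 (Nat.lt_succ_of_le (hDk t ht))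
  have hfd : ∀ j, j ≤ k → f j ≤ dd j := by
    intro j hj
    apply Finset.card_le_card
    intro s hs
    obtain ⟨hsF, hsj⟩ := Finset.mem_filter.1 hs
    refine Finset.mem_filter.2 ⟨Finset.mem_biUnion.2 ⟨s, hsF, ?_⟩, hsj⟩
    exact Finset.mem_filter.2 ⟨Finset.mem_powerset.2 (subset_refl s), by omega⟩
  have hsplitF : ∑ i ∈ Finset.range (d + 1), f i
      = ∑ i ∈ Finset.range (k + 1), f i + ∑ i ∈ Finset.Ioc k d, f i := by
    rw [Finset.range_eq_Ico, Finset.range_eq_Ico, ← Finset.Ico_add_one_add_one_eq_Ioc]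
    exact (Finset.sum_Ico_consecutive _ (m := 0) (n := k + 1) (k := d + 1) (by omega) (by omega)).symm
  by_cases hcase : ∀ i ∈ Finset.Ioc k d, f i = 0
  · have : #F ≤ #D := by
      rw [hFsum, hDsum, hsplitF, Finset.sum_eq_zero hcase, add_zero]
      refine Finset.sum_le_sum fun j hj => hfd j ?_
      exact Nat.lt_succ_iff.1 (Finset.mem_range.1 hj)
    exact this.trans (Nat.le_mul_of_pos_left _ hn1)
  · push_neg at hcase
    obtain ⟨i1, hi1, hfi1⟩ := hcase
    set G := (Finset.Ioc k d).filter fun i => f i ≠ 0 with hG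
    have hGne : G.Nonempty := ⟨i1, Finset.mem_filter.2 ⟨hi1, hfi1⟩⟩
    obtain ⟨i0, hi0G, hmax⟩ := Finset.exists_max_image G (fun i => (f i : ℚ) / m.choose i) hGne
    obtain ⟨hi0Ioc, hfi0⟩ := Finset.mem_filter.1 hi0G
    have hki0 : k < i0 := (Finset.mem_Ioc.1 hi0Ioc).1
    have hi0d : i0 ≤ d := (Finset.mem_Ioc.1 hi0Ioc).2
    -- i0 ≤ m
    have hcardle : ∀ i, f i ≠ 0 → i ≤ m := by
      intro i hi
      obtain ⟨s, hs⟩ := Finset.card_ne_zero.1 hi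
      obtain ⟨-, hsi⟩ := Finset.mem_filter.1 hs
      rw [← hsi]; exact s.card_le_univ
    have hi0m : i0 ≤ m := hcardle i0 hfi0
    have hchoosei0 : (0 : ℚ) < m.choose i0 := by
      exact_mod_cast Nat.choose_pos hi0m
    set R : ℚ := (f i0 : ℚ) / m.choose i0 with hR
    have hR0 : 0 ≤ R := by positivity
    have h1 : ∀ i ∈ Finset.Ioc k d, (f i : ℚ) ≤ R * m.choose i := by
      intro i hi
      rcases eq_or_ne (f i) 0 with h0 | h0
      · rw [h0]; push_cast; positivity
      · have him : i ≤ m := hcardle i h0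
        have hci : (0 : ℚ) < m.choose i := by exact_mod_cast Nat.choose_pos him
        have := hmax i (Finset.mem_filter.2 ⟨hi, h0⟩)
        rw [div_le_iff₀ hci] at this
        exact this.trans_eq rfl
    have h2 : ∀ j, j ≤ k → R * m.choose j ≤ (dd j : ℚ) := by
      intro j hj
      set 𝒜 := F.filter fun s => s.card = i0 with h𝒜def
      have h𝒜 : (𝒜 : Set (Finset α)).Sized i0 := fun s hs => (Finset.mem_filter.1 hs).2
      have hji0 : j ≤ i0 := hj.trans hki0.le
      have hilym := my_ilym (i0 - j) (by omega) 𝒜 h𝒜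
      have hij : i0 - (i0 - j) = j := by omega
      rw [hij] at hilym
      have hsub : ∂^[i0 - j] 𝒜 ⊆ D.filter fun t => t.card = j := by
        intro u hu
        have hucard : u.card = j := by
          have := h𝒜.shadow_iterate (k := i0 - j) hu
          rwa [hij] at this
        obtain ⟨s, hs𝒜, hus, -⟩ := Finset.mem_shadow_iterate_iff_exists_sdiff.1 hu
        refine Finset.mem_filter.2 ⟨Finset.mem_biUnion.2 ⟨s, (Finset.mem_filter.1 hs𝒜).1, ?_⟩,
          hucard⟩
        exact Finset.mem_filter.2 ⟨Finset.mem_powerset.2 hus, by omega⟩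
      have hcj : (0 : ℚ) < m.choose j := by
        exact_mod_cast Nat.choose_pos (hji0.trans hi0m)
      have : R ≤ (dd j : ℚ) / m.choose j := by
        refine hilym.trans ((div_le_div_iff_of_pos_right hcj).2 ?_)
        exact_mod_cast Finset.card_le_card hsub
      rwa [le_div_iff₀ hcj] at this
    -- final computation in ℚ
    set Sk : ℚ := ∑ i ∈ Finset.range (k + 1), ((m.choose i : ℚ)) with hSkdef
    set T : ℚ := ∑ j ∈ Finset.range (k + 1), ((dd j : ℚ)) with hTdef
    have hjk : ∀ j ∈ Finset.range (k + 1), j ≤ k := fun j hj =>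
      Nat.lt_succ_iff.1 (Finset.mem_range.1 hj)
    have hfT : ∑ i ∈ Finset.range (k + 1), ((f i : ℚ)) ≤ T :=
      Finset.sum_le_sum fun j hj => by exact_mod_cast hfd j (hjk j hj)
    have hRSk : R * Sk ≤ T := by
      rw [hSkdef, Finset.mul_sum]
      exact Finset.sum_le_sum fun j hj => h2 j (hjk j hj)
    have hstep1 : ∑ i ∈ Finset.Ioc k d, ((f i : ℚ))
        ≤ R * ∑ i ∈ Finset.Ioc k d, ((m.choose i : ℚ)) := by
      rw [Finset.mul_sum]
      exact Finset.sum_le_sum h1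
    have hsplitC : (∑ i ∈ Finset.range (d + 1), ((m.choose i : ℚ)))
        = Sk + ∑ i ∈ Finset.Ioc k d, ((m.choose i : ℚ)) := by
      rw [hSkdef, Finset.range_eq_Ico, Finset.range_eq_Ico, ← Finset.Ico_add_one_add_one_eq_Ioc]
      exact (Finset.sum_Ico_consecutive _ (m := 0) (n := k + 1) (k := d + 1) (by omega) (by omega)).symm
    have hnq : (∑ i ∈ Finset.range (d + 1), ((m.choose i : ℚ))) ≤ (n : ℚ) * Sk := by
      rw [hSkdef]
      exact_mod_cast hn
    have hIoc : ∑ i ∈ Finset.Ioc k d, ((m.choose i : ℚ)) ≤ ((n : ℚ) - 1) * Sk := by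
      rw [hsplitC] at hnq
      linarith
    have hT0 : 0 ≤ T := by
      rw [hTdef]
      exact Finset.sum_nonneg fun j _ => Nat.cast_nonneg _
    have hn1q : (1 : ℚ) ≤ n := by exact_mod_cast hn1
    have hfinal : (#F : ℚ) ≤ (n : ℚ) * T := by
      have e1 : (#F : ℚ) = ∑ i ∈ Finset.range (k + 1), ((f i : ℚ))
          + ∑ i ∈ Finset.Ioc k d, ((f i : ℚ)) := by
        rw [hFsum, hsplitF]
        push_cast
        ring
      have e2 : R * (∑ i ∈ Finset.Ioc k d, ((m.choose i : ℚ)))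
          ≤ R * (((n : ℚ) - 1) * Sk) := mul_le_mul_of_nonneg_left hIoc hR0
      have e3 : R * (((n : ℚ) - 1) * Sk) = ((n : ℚ) - 1) * (R * Sk) := by ring
      have e4 : ((n : ℚ) - 1) * (R * Sk) ≤ ((n : ℚ) - 1) * T :=
        mul_le_mul_of_nonneg_left hRSk (by linarith)
      have e5 : T + ((n : ℚ) - 1) * T = (n : ℚ) * T := by ring
      calc (#F : ℚ) = _ := e1
        _ ≤ T + R * (∑ i ∈ Finset.Ioc k d, ((m.choose i : ℚ))) := by
            exact add_le_add hfT hstep1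
        _ ≤ T + ((n : ℚ) - 1) * T := by
            refine add_le_add_right ((e2.trans_eq e3).trans e4) T
        _ = (n : ℚ) * T := e5
    have hTD : T = (#D : ℚ) := by
      rw [hTdef, hDsum]
      push_cast
      rfl
    rw [hTD] at hfinal
    exact_mod_cast hfinal

private lemma my_matching {α : Type*} [Fintype α] [DecidableEq α] {d k n : ℕ} (hk : k ≤ d)
    (hn : ∑ i ∈ Finset.range (d + 1), (Fintype.card α).choose i ≤
        n * ∑ i ∈ Finset.range (k + 1), (Fintype.card α).choose i) :
    ∃ f : {s : Finset α // s.card ≤ d} → Finset α × ℕ, Function.Injective f ∧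
      ∀ s, (f s).1 ⊆ s.1 ∧ (f s).1.card ≤ k ∧ (f s).2 < n := by
  set t : {s : Finset α // s.card ≤ d} → Finset (Finset α × ℕ) :=
    fun s => (s.1.powerset.filter fun u => u.card ≤ k) ×ˢ Finset.range n with ht
  have hall : ∀ S : Finset {s : Finset α // s.card ≤ d}, S.card ≤ (S.biUnion t).card := by
    intro S
    set F : Finset (Finset α) := S.image Subtype.val with hF
    have hcard : S.card = F.card := (Finset.card_image_of_injective S Subtype.val_injective).symm
    have hbi : S.biUnion t
        = (F.biUnion fun s => s.powerset.filter fun u => u.card ≤ k) ×ˢ Finset.range n := by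
      ext ⟨u, l⟩
      simp only [ht, hF, Finset.mem_biUnion, Finset.mem_product, Finset.mem_filter,
        Finset.mem_powerset, Finset.mem_range, Finset.mem_image]
      constructor
      · rintro ⟨s, hsS, ⟨hus, huk⟩, hl⟩
        exact ⟨⟨s.1, ⟨s, hsS, rfl⟩, hus, huk⟩, hl⟩
      · rintro ⟨⟨v, ⟨s, hsS, rfl⟩, hus, huk⟩, hl⟩
        exact ⟨s, hsS, ⟨hus, huk⟩, hl⟩
    have hFd : ∀ s ∈ F, s.card ≤ d := by
      rintro s hs
      obtain ⟨v, _, rfl⟩ := Finset.mem_image.1 hs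
      exact v.2
    have := my_core hk hn F hFd
    rw [hcard, hbi, Finset.card_product, Finset.card_range, mul_comm]
    exact this
  obtain ⟨f, hinj, hmem⟩ := (Finset.all_card_le_biUnion_card_iff_exists_injective t).1 hall
  refine ⟨f, hinj, fun s => ?_⟩
  have := hmem s
  rw [ht] at this
  simp only [Finset.mem_product, Finset.mem_filter, Finset.mem_powerset, Finset.mem_range] at this
  exact ⟨this.1.1, this.1.2, this.2⟩

/-- Proposition 2.4.4: if `|X| = m`, `(X, 𝒞)` has a sample compression scheme of size
`d`, `k ≤ d`, and `n · ∑_{i=0}^k binom(m, i) ≥ ∑_{i=0}^d binom(m, i)`, then `(X, 𝒞)`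
has an `n`-copy sample compression scheme of size `k`. -/
theorem stmt_10 {X : Type*} [Fintype X] (𝒞 : Set (Set X)) (d k n : ℕ)
    (h : ∃ H : Set X → Set X, IsUnlabelledSCS 𝒞 d H) (hk : k ≤ d)
    (hn : ∑ i ∈ Finset.range (d + 1), (Fintype.card X).choose i ≤
        n * ∑ i ∈ Finset.range (k + 1), (Fintype.card X).choose i) :
    ∃ H : Set X → ℕ → Set X, IsCopySCS 𝒞 k (fun _ => n) H := by
  classical
  obtain ⟨H, hH⟩ := h
  obtain ⟨f, hinj, hf⟩ := my_matching (α := X) hk hn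
  refine ⟨fun τ l => if hl : ∃ s : {s : Finset X // s.card ≤ d},
      f s = ((Set.toFinite τ).toFinset, l - 1) then H ↑(hl.choose.1) else ∅, ?_⟩
  intro C hC A hA
  obtain ⟨σ', hσ'A, hσ'card, hHσ'⟩ := hH C hC A hA
  have hfin : σ'.Finite := Set.toFinite σ'
  set s : Finset X := hfin.toFinset with hs
  have hsd : s.card ≤ d := by
    rw [hs, ← Set.ncard_eq_toFinset_card σ' hfin]
    exact hσ'card
  set sι : {s : Finset X // s.card ≤ d} := ⟨s, hsd⟩ with hsι
  obtain ⟨hsub, hcardk, hltn⟩ := hf sι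
  refine ⟨↑(f sι).1, ?_, ?_, (f sι).2 + 1, le_refl _ |>.trans (Nat.le_add_left 1 _), ?_, ?_⟩
  · intro x hx
    exact hσ'A (by rw [← hfin.coe_toFinset]; exact hsub hx)
  · rw [Set.ncard_coe_finset]
    exact hcardk
  · show (f sι).2 + 1 ≤ n
    omega
  · have hts : (Set.toFinite ((f sι).1 : Set X)).toFinset = (f sι).1 := by
      ext x
      simp [Set.Finite.mem_toFinset]
      exact Iff.rfl
    have hex : ∃ s' : {s : Finset X // s.card ≤ d},
        f s' = ((Set.toFinite ((f sι).1 : Set X)).toFinset, (f sι).2 + 1 - 1) := by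
      refine ⟨sι, ?_⟩
      rw [hts]
      simp
    beta_reduce
    rw [dif_pos hex]
    have hch : hex.choose = sι := by
      apply hinj
      rw [hex.choose_spec, hts]
      simp
    rw [hch]
    show H ↑s ∩ A = C ∩ A
    rw [hs, hfin.coe_toFinset]
    exact hHσ'
end

section
/- Let (X, 𝒞) be a concept space and suppose 𝒞 ⊆ ⋃_{j=1}^{n} 𝒞_j, where each concept space (X, 𝒞_j) has an unlabelled sample compression scheme of size d_j. Set k = max_{1≤j≤n} d_j and n_i = |{j : d_j ≥ i}| for 0 ≤ i ≤ k. Then (X, 𝒞) has an (n_i)-copy unlabelled sample compression scheme of size k. -/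
open Set MeasureTheory Filter

/-- Proposition 2.4.7: if `𝒞 ⊆ ⋃_j 𝒞_j` where each `(X, 𝒞_j)` has a sample compression
scheme of size `d_j`, then `(X, 𝒞)` has an `(n_i)`-copy sample compression scheme of
size `k = max_j d_j`, where `n_i = |{j : d_j ≥ i}|`. -/
theorem stmt_11 {X : Type*} (𝒞 : Set (Set X)) (n : ℕ) (𝒞s : Fin n → Set (Set X))
    (ds : Fin n → ℕ) (hsub : 𝒞 ⊆ ⋃ j, 𝒞s j)
    (hschemes : ∀ j, ∃ H : Set X → Set X, IsUnlabelledSCS (𝒞s j) (ds j) H) :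
    ∃ H : Set X → ℕ → Set X,
      IsCopySCS 𝒞 (Finset.univ.sup ds)
        (fun i => (Finset.univ.filter fun j => i ≤ ds j).card) H := by
  choose Hs hHs using hschemes
  classical
  set S : ℕ → Finset (Fin n) := fun i => Finset.univ.filter fun j => i ≤ ds j with hS
  refine ⟨fun σ l =>
    if h : l - 1 < (S σ.ncard).card then
      Hs (((S σ.ncard).orderIsoOfFin rfl) ⟨l - 1, h⟩) σ
    else ∅, ?_⟩
  intro C hC A hA
  obtain ⟨j, hj⟩ := Set.mem_iUnion.mp (hsub hC)
  obtain ⟨σ, hσA, hσd, hσH⟩ := hHs j C hj A hA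
  have hjS : j ∈ S σ.ncard := by simp [hS, hσd]
  set e := (S σ.ncard).orderIsoOfFin (rfl : (S σ.ncard).card = (S σ.ncard).card)
  set l : ℕ := (e.symm ⟨j, hjS⟩).val + 1 with hl
  have hlt : l - 1 < (S σ.ncard).card := by
    simp only [hl, Nat.add_sub_cancel]; exact (e.symm ⟨j, hjS⟩).isLt
  refine ⟨σ, hσA, le_trans hσd (Finset.le_sup (Finset.mem_univ j)), l, Nat.le_add_left 1 _,
    by show l ≤ (S σ.ncard).card; omega, ?_⟩
  have heval : (e ⟨l - 1, hlt⟩ : Fin n) = j := by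
    have : (⟨l - 1, hlt⟩ : Fin (S σ.ncard).card) = e.symm ⟨j, hjS⟩ := by
      ext; simp [hl]
    rw [this, OrderIso.apply_symm_apply]
  simp only [dif_pos hlt, heval]
  rw [← heval] at hσH; exact hσH
end

section
/- Let 0 < ε ≤ 1, 0 < δ ≤ 1, and let m, d be positive integers. If there exists β with 0 < β < 1 such that m ≥ (1/(1−β)) · ((1/ε)·ln(1/δ) + d + (d/ε)·ln(1/(βε))), then Σ_{n=0}^{d} binom(m, n)·(1−ε)^{m−n} ≤ δ. -/
open Finset

/-- Lemma 3.2.2 (Floyd–Warmuth): if `0 < ε ≤ 1`, `0 < δ ≤ 1`, `m, d` are positive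
integers and there is `0 < β < 1` with
`m ≥ (1/(1-β)) · ((1/ε)·ln(1/δ) + d + (d/ε)·ln(1/(βε)))`, then
`∑_{n=0}^d binom(m, n)·(1-ε)^(m-n) ≤ δ`. -/
theorem stmt_12 (ε δ : ℝ) (m d : ℕ) (hε : 0 < ε) (hε1 : ε ≤ 1)
    (hδ : 0 < δ) (hδ1 : δ ≤ 1) (hm : 0 < m) (hd : 0 < d)
    (hβ : ∃ β : ℝ, 0 < β ∧ β < 1 ∧
      (1 / (1 - β)) * ((1 / ε) * Real.log (1 / δ) + d + (d / ε) * Real.log (1 / (β * ε)))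
        ≤ (m : ℝ)) :
    ∑ n ∈ Finset.range (d + 1), (m.choose n : ℝ) * (1 - ε) ^ (m - n) ≤ δ := by
  obtain ⟨β, hβ0, hβ1, hineq⟩ := hβ
  have h1mβ : (0:ℝ) < 1 - β := by linarith
  have hβε : 0 < β * ε := mul_pos hβ0 hε
  have hβε1 : β * ε < 1 := by nlinarith
  have hmR : (0:ℝ) < m := by exact_mod_cast hm
  have hdR : (0:ℝ) < d := by exact_mod_cast hd
  have hLδ : Real.log (1 / δ) = -Real.log δ := by rw [one_div, Real.log_inv]
  have hLβ : Real.log (1 / (β * ε)) = -Real.log (β * ε) := by rw [one_div, Real.log_inv]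
  rw [hLδ, hLβ] at hineq
  have hlogδ : Real.log δ ≤ 0 := Real.log_nonpos hδ.le hδ1
  have hlogβε : Real.log (β * ε) ≤ 0 := Real.log_nonpos hβε.le hβε1.le
  -- key linear inequality
  have key : -Real.log δ + ε * d + d * (-Real.log (β * ε)) ≤ ε * (1 - β) * m := by
    have e1 : ε * (1 - β) * ((1 / (1 - β)) * ((1 / ε) * (-Real.log δ) + d
        + (d / ε) * (-Real.log (β * ε))))
        = -Real.log δ + ε * d + d * (-Real.log (β * ε)) := by
      field_simp
    have h := mul_le_mul_of_nonneg_left hineq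
      (by positivity : (0:ℝ) ≤ ε * (1 - β))
    rw [e1] at h
    exact h
  have hdm : d < m := by
    have : (d:ℝ) < m := by nlinarith [mul_pos hβ0 hmR]
    exact_mod_cast this
  have hdmR : (d:ℝ) ≤ m := le_of_lt (by exact_mod_cast hdm)
  set r : ℝ := (d:ℝ) / m with hr
  have hr0 : 0 < r := div_pos hdR hmR
  have hr1 : r ≤ 1 := by rw [div_le_one hmR]; exact hdmR
  have hmd : (1:ℝ) ≤ (m:ℝ) / d := by rw [le_div_iff₀ hdR]; simpa using hdmR
  have h1ε0 : (0:ℝ) ≤ 1 - ε := by linarith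
  have h1ε1 : (1:ℝ) - ε ≤ 1 := by linarith
  -- Step A: termwise bound
  have stepA : ∑ n ∈ Finset.range (d + 1), (m.choose n : ℝ) * (1 - ε) ^ (m - n)
      ≤ (1 - ε) ^ (m - d) * (((m:ℝ) / d) ^ d *
        ∑ n ∈ Finset.range (d + 1), (m.choose n : ℝ) * r ^ n) := by
    rw [Finset.mul_sum, Finset.mul_sum]
    apply Finset.sum_le_sum
    intro n hn
    have hnd : n ≤ d := Nat.lt_succ_iff.mp (Finset.mem_range.mp hn)
    have hpow : (1 - ε) ^ (m - n) ≤ (1 - ε) ^ (m - d) :=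
      pow_le_pow_of_le_one h1ε0 h1ε1 (Nat.sub_le_sub_left hnd m)
    have hone : (1:ℝ) ≤ ((m:ℝ) / d) ^ d * r ^ n := by
      have : ((m:ℝ) / d) ^ d * r ^ n = ((m:ℝ) / d) ^ (d - n) := by
        have hsplit : ((m:ℝ) / d) ^ d = ((m:ℝ) / d) ^ (d - n) * ((m:ℝ) / d) ^ n := by
          rw [← pow_add, Nat.sub_add_cancel hnd]
        rw [hsplit, mul_assoc, ← mul_pow]
        have : (m:ℝ) / d * r = 1 := by
          rw [hr]; field_simp
        rw [this, one_pow, mul_one]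
      rw [this]
      exact one_le_pow₀ hmd
    calc (m.choose n : ℝ) * (1 - ε) ^ (m - n)
        ≤ (m.choose n : ℝ) * (1 - ε) ^ (m - d) := by
          apply mul_le_mul_of_nonneg_left hpow (Nat.cast_nonneg _)
      _ = (1 - ε) ^ (m - d) * ((m.choose n : ℝ) * 1) := by ring
      _ ≤ (1 - ε) ^ (m - d) * (((m:ℝ) / d) ^ d * ((m.choose n : ℝ) * r ^ n)) := by
          apply mul_le_mul_of_nonneg_left _ (pow_nonneg h1ε0 _)
          calc (m.choose n : ℝ) * 1 ≤ (m.choose n : ℝ) * (((m:ℝ)/d) ^ d * r ^ n) :=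
                mul_le_mul_of_nonneg_left hone (Nat.cast_nonneg _)
            _ = ((m:ℝ)/d) ^ d * ((m.choose n : ℝ) * r ^ n) := by ring
  -- Step B: binomial sum bound
  have stepB : ∑ n ∈ Finset.range (d + 1), (m.choose n : ℝ) * r ^ n ≤ (r + 1) ^ m := by
    have hexp : (r + 1) ^ m = ∑ n ∈ Finset.range (m + 1),
        r ^ n * 1 ^ (m - n) * (m.choose n : ℝ) := by
      rw [add_pow]
    rw [hexp]
    have hsub : Finset.range (d + 1) ⊆ Finset.range (m + 1) :=
      Finset.range_subset_range.mpr (by omega)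
    calc ∑ n ∈ Finset.range (d + 1), (m.choose n : ℝ) * r ^ n
        = ∑ n ∈ Finset.range (d + 1), r ^ n * 1 ^ (m - n) * (m.choose n : ℝ) := by
          apply Finset.sum_congr rfl; intro n _; ring
      _ ≤ ∑ n ∈ Finset.range (m + 1), r ^ n * 1 ^ (m - n) * (m.choose n : ℝ) := by
          apply Finset.sum_le_sum_of_subset_of_nonneg hsub
          intro n _ _
          positivity
  -- exponential bounds
  have expB : (r + 1) ^ m ≤ Real.exp (d:ℝ) := by
    have h1 : r + 1 ≤ Real.exp r := by
      have := Real.add_one_le_exp r; linarith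
    calc (r + 1) ^ m ≤ (Real.exp r) ^ m := by
          apply pow_le_pow_left₀ (by linarith) h1
      _ = Real.exp ((m:ℝ) * r) := (Real.exp_nat_mul r m).symm
      _ = Real.exp (d:ℝ) := by
          congr 1
          rw [hr]; field_simp
  have expA : (1 - ε) ^ (m - d) ≤ Real.exp (-(ε * ((m:ℝ) - d))) := by
    have h1 : 1 - ε ≤ Real.exp (-ε) := by
      have := Real.add_one_le_exp (-ε); linarith
    calc (1 - ε) ^ (m - d) ≤ (Real.exp (-ε)) ^ (m - d) := pow_le_pow_left₀ h1ε0 h1 _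
      _ = Real.exp (((m - d : ℕ):ℝ) * (-ε)) := (Real.exp_nat_mul _ _).symm
      _ = Real.exp (-(ε * ((m:ℝ) - d))) := by
          rw [Nat.cast_sub (le_of_lt hdm)]; ring_nf
  have expC : ((m:ℝ) / d) ^ d = Real.exp ((d:ℝ) * Real.log ((m:ℝ)/d)) := by
    rw [Real.exp_nat_mul, Real.exp_log (by positivity)]
  -- final log inequality
  have hlogkey : -(ε * ((m:ℝ) - d)) + ((d:ℝ) * Real.log ((m:ℝ)/d) + d) ≤ Real.log δ := by
    have hx : Real.log (β * ε * ((m:ℝ)/d)) ≤ β * ε * ((m:ℝ)/d) - 1 :=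
      Real.log_le_sub_one_of_pos (by positivity)
    have hsplit : Real.log (β * ε * ((m:ℝ)/d)) = Real.log (β * ε) + Real.log ((m:ℝ)/d) := by
      rw [Real.log_mul (ne_of_gt hβε) (by positivity)]
    rw [hsplit] at hx
    have hx' := mul_le_mul_of_nonneg_left hx hdR.le
    have hid : (d:ℝ) * (β * ε * ((m:ℝ)/d)) = β * ε * m := by field_simp
    nlinarith [hx', key]
  -- combine
  have sum_nonneg' : (0:ℝ) ≤ ∑ n ∈ Finset.range (d + 1), (m.choose n : ℝ) * r ^ n := by
    apply Finset.sum_nonneg; intro n _; positivity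
  calc ∑ n ∈ Finset.range (d + 1), (m.choose n : ℝ) * (1 - ε) ^ (m - n)
      ≤ (1 - ε) ^ (m - d) * (((m:ℝ) / d) ^ d *
        ∑ n ∈ Finset.range (d + 1), (m.choose n : ℝ) * r ^ n) := stepA
    _ ≤ (1 - ε) ^ (m - d) * (((m:ℝ) / d) ^ d * (r + 1) ^ m) := by
        apply mul_le_mul_of_nonneg_left _ (pow_nonneg h1ε0 _)
        exact mul_le_mul_of_nonneg_left stepB (by positivity)
    _ ≤ Real.exp (-(ε * ((m:ℝ) - d))) * (Real.exp ((d:ℝ) * Real.log ((m:ℝ)/d)) * Real.exp (d:ℝ)) := by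
        apply mul_le_mul expA _ (by positivity) (Real.exp_nonneg _)
        rw [← expC]
        exact mul_le_mul_of_nonneg_left expB (by positivity)
    _ = Real.exp (-(ε * ((m:ℝ) - d)) + ((d:ℝ) * Real.log ((m:ℝ)/d) + d)) := by
        rw [← Real.exp_add, ← Real.exp_add]
    _ ≤ Real.exp (Real.log δ) := Real.exp_le_exp.mpr hlogkey
    _ = δ := Real.exp_log hδ
end

section
/- Let (X, 𝔄) be a measurable space, P a probability measure on (X, 𝔄), C ∈ 𝔄, ε > 0, d ∈ ℕ, and let 𝓗 be any function from the subsets of X of cardinality at most d to 2^X satisfying condition (M5). Then for every integer m ≥ d, the m-fold product measure P^m of the set of all (a_1,…,a_m) ∈ X^m for which there exists σ ⊆ {a_1,…,a_m} with |σ| ≤ d such that P(𝓗(σ) Δ C) > ε and 𝓗(σ) ∩ {a_1,…,a_m} = C ∩ {a_1,…,a_m}, is at most Σ_{n=0}^{d} binom(m, n)·(1−ε)^{m−n}. (This set is measurable in the product σ-algebra 𝔄^m.) -/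
open Set MeasureTheory

/-- Condition (M5) for a function `H` from subsets of `X` of cardinality at most `d`
to subsets of `X`: `H ∅` is measurable and for each `1 ≤ i ≤ d` the set
`{(x_1, …, x_{i+1}) : x_{i+1} ∈ H {x_1, …, x_i}}` is product-measurable. -/
def M5cond {X : Type*} [MeasurableSpace X] (d : ℕ) (H : Set X → Set X) : Prop :=
  MeasurableSet (H ∅) ∧
  ∀ i : ℕ, 1 ≤ i → i ≤ d →
    MeasurableSet {x : Fin (i + 1) → X |
      x (Fin.last i) ∈ H (Set.range fun j : Fin i => x j.castSucc)}

lemma aux_measDn {X : Type*} [MeasurableSpace X] {d : ℕ} {H : Set X → Set X}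
    (hM5 : M5cond d H) {C : Set X} (hC : MeasurableSet C) {n : ℕ} (hn : n ≤ d) :
    MeasurableSet {x : (Fin n → X) × X | x.2 ∈ symmDiff (H (Set.range x.1)) C} := by
  have h1 : MeasurableSet {x : (Fin n → X) × X | x.2 ∈ H (Set.range x.1)} := by
    match n, hn with
    | 0, _ =>
      have : {x : (Fin 0 → X) × X | x.2 ∈ H (Set.range x.1)} = Prod.snd ⁻¹' (H ∅) := by
        ext x; simp [Set.range_eq_empty]
      rw [this]; exact measurable_snd hM5.1
    | (k+1), hn =>
      have hA := hM5.2 (k+1) (Nat.succ_le_succ (Nat.zero_le k)) hn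
      have hφ : Measurable (fun x : (Fin (k+1) → X) × X => (Fin.snoc x.1 x.2 : Fin (k+2) → X)) := by
        apply measurable_pi_lambda
        intro j
        refine Fin.lastCases ?_ ?_ j
        · simpa [Fin.snoc_last] using measurable_snd
        · intro i
          simp only [Fin.snoc_castSucc]
          exact (measurable_pi_apply i).comp measurable_fst
      have heq : {x : (Fin (k+1) → X) × X | x.2 ∈ H (Set.range x.1)} =
          (fun x : (Fin (k+1) → X) × X => (Fin.snoc x.1 x.2 : Fin (k+2) → X)) ⁻¹'
            {y : Fin (k+1+1) → X |
              y (Fin.last (k+1)) ∈ H (Set.range fun j : Fin (k+1) => y j.castSucc)} := by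
        ext x
        have h2 : (fun j : Fin (k+1) => (Fin.snoc x.1 x.2 : Fin (k+2) → X) j.castSucc) = x.1 := by
          funext j; simp [Fin.snoc_castSucc]
        simp only [Set.mem_setOf_eq, Set.mem_preimage, Fin.snoc_last, h2]
      rw [heq]; exact hφ hA
  have heq : {x : (Fin n → X) × X | x.2 ∈ symmDiff (H (Set.range x.1)) C}
      = ({x : (Fin n → X) × X | x.2 ∈ H (Set.range x.1)} \ (Prod.snd ⁻¹' C)) ∪
        ((Prod.snd ⁻¹' C) \ {x : (Fin n → X) × X | x.2 ∈ H (Set.range x.1)}) := by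
    ext x; simp [Set.mem_symmDiff]
  rw [heq]
  exact (h1.diff (measurable_snd hC)).union ((measurable_snd hC).diff h1)

lemma aux_boundS {X : Type*} [MeasurableSpace X] (P : Measure X) [IsProbabilityMeasure P]
    {C : Set X} (hC : MeasurableSet C) (ε : ℝ) {d : ℕ}
    {H : Set X → Set X} (hM5 : M5cond d H) {m : ℕ} (S : Finset (Fin m)) (hS : S.card ≤ d) :
    (Measure.pi fun _ : Fin m => P)
      {a : Fin m → X | ENNReal.ofReal ε < P (symmDiff (H (a '' ↑S)) C) ∧
        ∀ j ∉ S, a j ∉ symmDiff (H (a '' ↑S)) C} ≤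
      (1 - ENNReal.ofReal ε) ^ (m - S.card) := by
  classical
  set n := S.card with hn
  set Dn : Set ((Fin n → X) × X) :=
    {x : (Fin n → X) × X | x.2 ∈ symmDiff (H (Set.range x.1)) C} with hDndef
  have hDn : MeasurableSet Dn := aux_measDn hM5 hC hS
  set e : Fin n ↪o Fin m := S.orderEmbOfFin rfl with he
  set κ : ({i : Fin m // i ∈ S} → X) → (Fin n → X) :=
    fun u k => u ⟨e k, S.orderEmbOfFin_mem rfl k⟩ with hκdef
  have hκ : Measurable κ := measurable_pi_lambda _ fun k => measurable_pi_apply _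
  have hrange : ∀ u : {i : Fin m // i ∈ S} → X, Set.range (κ u) = Set.range u := by
    intro u
    apply Set.Subset.antisymm
    · rintro _ ⟨k, rfl⟩; exact ⟨_, rfl⟩
    · rintro _ ⟨i, rfl⟩
      have hi : (i : Fin m) ∈ (↑S : Set (Fin m)) := i.2
      rw [← S.range_orderEmbOfFin rfl] at hi
      obtain ⟨k, hk⟩ := hi
      refine ⟨k, ?_⟩
      simp only [hκdef]
      congr 1
      exact Subtype.ext hk
  set Dset : ({i : Fin m // i ∈ S} → X) → Set X := fun u => Prod.mk (κ u) ⁻¹' Dn with hDsetdef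
  have hDset : ∀ u, Dset u = symmDiff (H (Set.range u)) C := by
    intro u
    ext y
    simp only [hDsetdef, Set.mem_preimage, hDndef, Set.mem_setOf_eq, hrange u]
  have hDsetMeas : ∀ u, MeasurableSet (Dset u) := fun u => measurable_prodMk_left hDn
  set g : ({i : Fin m // i ∈ S} → X) → ENNReal := fun u => P (Dset u) with hgdef
  have hg : Measurable g := by
    exact (measurable_measure_prodMk_left hDn).comp hκ
  set F : Set (({i : Fin m // i ∈ S} → X) × ({i : Fin m // ¬ i ∈ S} → X)) :=
    {uv | ENNReal.ofReal ε < g uv.1 ∧ ∀ j : {i : Fin m // ¬ i ∈ S}, uv.2 j ∉ Dset uv.1} with hFdef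
  have hF : MeasurableSet F := by
    have h1 : MeasurableSet {uv : ({i : Fin m // i ∈ S} → X) × ({i : Fin m // ¬ i ∈ S} → X) |
        ENNReal.ofReal ε < g uv.1} :=
      (hg.comp measurable_fst) measurableSet_Ioi
    have h2 : ∀ j : {i : Fin m // ¬ i ∈ S},
        MeasurableSet {uv : ({i : Fin m // i ∈ S} → X) × ({i : Fin m // ¬ i ∈ S} → X) |
          uv.2 j ∉ Dset uv.1} := by
      intro j
      have hmap : Measurable (fun uv : ({i : Fin m // i ∈ S} → X) × ({i : Fin m // ¬ i ∈ S} → X) =>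
          (κ uv.1, uv.2 j)) :=
        (hκ.comp measurable_fst).prodMk ((measurable_pi_apply j).comp measurable_snd)
      exact (hmap hDn).compl
    have : F = {uv : ({i : Fin m // i ∈ S} → X) × ({i : Fin m // ¬ i ∈ S} → X) |
        ENNReal.ofReal ε < g uv.1} ∩ ⋂ j, {uv | uv.2 j ∉ Dset uv.1} := by
      ext uv; simp [hFdef]
    rw [this]
    exact h1.inter (MeasurableSet.iInter h2)
  set ψ := MeasurableEquiv.piEquivPiSubtypeProd (fun _ : Fin m => X) (· ∈ S) with hψdef
  have hmp := measurePreserving_piEquivPiSubtypeProd (fun _ : Fin m => P) (· ∈ S)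
  have hEeq : {a : Fin m → X | ENNReal.ofReal ε < P (symmDiff (H (a '' ↑S)) C) ∧
      ∀ j ∉ S, a j ∉ symmDiff (H (a '' ↑S)) C} = ψ ⁻¹' F := by
    ext a
    have hag : a '' ↑S = Set.range (fun i : {i : Fin m // i ∈ S} => a i) := by
      ext y
      constructor
      · rintro ⟨i, hi, rfl⟩; exact ⟨⟨i, hi⟩, rfl⟩
      · rintro ⟨i, rfl⟩; exact ⟨i, i.2, rfl⟩
    have hψa : ψ a = (fun i : {i : Fin m // i ∈ S} => a i.1,
        fun j : {i : Fin m // ¬ i ∈ S} => a j.1) := rfl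
    simp only [Set.mem_setOf_eq, Set.mem_preimage, hFdef, hgdef, hDset, hψa]
    constructor
    · rintro ⟨h1, h2⟩
      refine ⟨by rw [← hag]; exact h1, fun j => by rw [← hag]; exact h2 j j.2⟩
    · rintro ⟨h1, h2⟩
      refine ⟨by rw [hag]; exact h1, fun j hj => by rw [hag]; exact h2 ⟨j, hj⟩⟩
  rw [hEeq, hmp.measure_preimage hF.nullMeasurableSet]
  rw [Measure.prod_apply hF]
  have hcard : Fintype.card {i : Fin m // ¬ i ∈ S} = m - n := by
    simp [Fintype.card_subtype_compl, Finset.card_univ, hn]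
  have hbound : ∀ u : {i : Fin m // i ∈ S} → X,
      (Measure.pi fun _ : {i : Fin m // ¬ i ∈ S} => P) (Prod.mk u ⁻¹' F) ≤
        (1 - ENNReal.ofReal ε) ^ (m - n) := by
    intro u
    by_cases h : ENNReal.ofReal ε < g u
    · have hset : Prod.mk u ⁻¹' F = Set.pi Set.univ (fun _ => (Dset u)ᶜ) := by
        ext v; simp [hFdef, h, Set.mem_pi]
      rw [hset, Measure.pi_pi]
      calc ∏ _j : {i : Fin m // ¬ i ∈ S}, P (Dset u)ᶜ
          ≤ ∏ _j : {i : Fin m // ¬ i ∈ S}, (1 - ENNReal.ofReal ε) := by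
            apply Finset.prod_le_prod'
            intro j _
            rw [prob_compl_eq_one_sub (hDsetMeas u)]
            exact tsub_le_tsub_left h.le 1
        _ = (1 - ENNReal.ofReal ε) ^ (m - n) := by
            rw [Finset.prod_const, Finset.card_univ, hcard]
    · have hset : Prod.mk u ⁻¹' F = ∅ := by
        ext v; simp [hFdef, h]
      simp [hset]
  refine le_trans (lintegral_mono hbound) ?_
  rw [lintegral_const, measure_univ, mul_one]

/-- Theorem 3.2.1 (Littlestone–Warmuth): for any probability measure `P`, measurable
concept `C`, `ε > 0` and function `H` on subsets of size at most `d` satisfying (M5),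
the `P^m`-measure of the set of samples `(a_1, …, a_m)` (with `m ≥ d`) containing a
subset `σ` of size at most `d` with `P(H(σ) Δ C) > ε` and `H(σ)` agreeing with `C` on
the sample is at most `∑_{n=0}^d binom(m, n)·(1-ε)^(m-n)`. -/
theorem stmt_13 {X : Type*} [MeasurableSpace X] (P : Measure X) [IsProbabilityMeasure P]
    (C : Set X) (hC : MeasurableSet C) (ε : ℝ) (hε : 0 < ε) (d : ℕ)
    (H : Set X → Set X) (hM5 : M5cond d H) (m : ℕ) (hm : d ≤ m) :
    (Measure.pi fun _ : Fin m => P)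
        {a : Fin m → X | ∃ σ : Set X, σ ⊆ Set.range a ∧ σ.ncard ≤ d ∧
          ENNReal.ofReal ε < P (symmDiff (H σ) C) ∧
          H σ ∩ Set.range a = C ∩ Set.range a} ≤
      ENNReal.ofReal (∑ n ∈ Finset.range (d + 1), (m.choose n : ℝ) * (1 - ε) ^ (m - n)) := by
  classical
  by_cases hε1 : 1 ≤ ε
  · have hempty : {a : Fin m → X | ∃ σ : Set X, σ ⊆ Set.range a ∧ σ.ncard ≤ d ∧
        ENNReal.ofReal ε < P (symmDiff (H σ) C) ∧
        H σ ∩ Set.range a = C ∩ Set.range a} = ∅ := by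
      ext a
      simp only [Set.mem_setOf_eq, Set.mem_empty_iff_false, iff_false, not_exists]
      intro σ hcon
      have h1 : (1 : ENNReal) ≤ ENNReal.ofReal ε := ENNReal.one_le_ofReal.mpr hε1
      have h2 : P (symmDiff (H σ) C) ≤ 1 := prob_le_one
      exact absurd (h1.trans_lt (hcon.2.2.1.trans_le h2)) (lt_irrefl _)
    rw [hempty]
    simp
  · push_neg at hε1
    set 𝒮 : Finset (Finset (Fin m)) :=
      (Finset.range (d + 1)).biUnion (fun n => Finset.powersetCard n (Finset.univ : Finset (Fin m)))
      with h𝒮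
    set ES : Finset (Fin m) → Set (Fin m → X) := fun S =>
      {a : Fin m → X | ENNReal.ofReal ε < P (symmDiff (H (a '' ↑S)) C) ∧
        ∀ j ∉ S, a j ∉ symmDiff (H (a '' ↑S)) C} with hES
    have hScard : ∀ S ∈ 𝒮, S.card ≤ d := by
      intro S hSmem
      rw [h𝒮, Finset.mem_biUnion] at hSmem
      obtain ⟨nn, hnn, hSn⟩ := hSmem
      rw [Finset.mem_powersetCard] at hSn
      have := Finset.mem_range.mp hnn
      omega
    have hcover : {a : Fin m → X | ∃ σ : Set X, σ ⊆ Set.range a ∧ σ.ncard ≤ d ∧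
        ENNReal.ofReal ε < P (symmDiff (H σ) C) ∧
        H σ ∩ Set.range a = C ∩ Set.range a} ⊆ ⋃ S ∈ 𝒮, ES S := by
      rintro a ⟨σ, hσr, hσd, hPσ, hagree⟩
      have hfin : σ.Finite := (Set.finite_range a).subset hσr
      have hch : ∀ x ∈ σ, ∃ i, a i = x := fun x hx => hσr hx
      choose f hf using hch
      set S : Finset (Fin m) :=
        hfin.toFinset.attach.image (fun x => f x.1 (hfin.mem_toFinset.mp x.2)) with hSdef
      have hSim : a '' ↑S = σ := by
        apply Set.Subset.antisymm
        · rintro _ ⟨i, hi, rfl⟩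
          rw [hSdef] at hi
          simp only [Finset.coe_image, Set.mem_image, Finset.mem_coe,
            Finset.mem_attach] at hi
          obtain ⟨x, -, rfl⟩ := hi
          rw [hf x.1 (hfin.mem_toFinset.mp x.2)]
          exact hfin.mem_toFinset.mp x.2
        · intro y hy
          refine ⟨f y hy, ?_, hf y hy⟩
          rw [hSdef]
          simp only [Finset.mem_coe, Finset.mem_image, Finset.mem_attach]
          exact ⟨⟨y, hfin.mem_toFinset.mpr hy⟩, trivial, rfl⟩
      have hScd : S.card ≤ d := by
        calc S.card ≤ hfin.toFinset.attach.card := Finset.card_image_le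
          _ = hfin.toFinset.card := Finset.card_attach
          _ = σ.ncard := (Set.ncard_eq_toFinset_card σ hfin).symm
          _ ≤ d := hσd
      have hSmem : S ∈ 𝒮 := by
        rw [h𝒮, Finset.mem_biUnion]
        exact ⟨S.card, Finset.mem_range.mpr (Nat.lt_succ_of_le hScd),
          Finset.mem_powersetCard.mpr ⟨Finset.subset_univ S, rfl⟩⟩
      refine Set.mem_biUnion hSmem ?_
      rw [hES]
      refine ⟨by rw [hSim]; exact hPσ, fun j _ => ?_⟩
      rw [hSim]
      intro hmem
      have hrg : a j ∈ Set.range a := ⟨j, rfl⟩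
      have := Set.ext_iff.mp hagree (a j)
      simp only [Set.mem_inter_iff, hrg, and_true] at this
      rw [Set.mem_symmDiff] at hmem
      tauto
    have hsum : (Measure.pi fun _ : Fin m => P) {a : Fin m → X | ∃ σ : Set X,
        σ ⊆ Set.range a ∧ σ.ncard ≤ d ∧
        ENNReal.ofReal ε < P (symmDiff (H σ) C) ∧
        H σ ∩ Set.range a = C ∩ Set.range a} ≤
        ∑ S ∈ 𝒮, (1 - ENNReal.ofReal ε) ^ (m - S.card) := by
      refine le_trans (measure_mono hcover) ?_
      refine le_trans (measure_biUnion_finset_le 𝒮 ES) ?_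
      exact Finset.sum_le_sum fun S hSmem => aux_boundS P hC ε hM5 S (hScard S hSmem)
    refine le_trans hsum ?_
    have hdisj : (↑(Finset.range (d + 1)) : Set ℕ).PairwiseDisjoint
        (fun n => Finset.powersetCard n (Finset.univ : Finset (Fin m))) := by
      intro i _ j _ hij
      apply Finset.disjoint_left.mpr
      intro S hSi hSj
      exact hij ((Finset.mem_powersetCard.mp hSi).2.symm.trans
        (Finset.mem_powersetCard.mp hSj).2)
    rw [h𝒮, Finset.sum_biUnion hdisj]
    have hterm : ∀ n ∈ Finset.range (d + 1),
        ∑ S ∈ Finset.powersetCard n (Finset.univ : Finset (Fin m)),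
          (1 - ENNReal.ofReal ε) ^ (m - S.card) =
        (m.choose n : ENNReal) * (1 - ENNReal.ofReal ε) ^ (m - n) := by
      intro n _
      rw [Finset.sum_congr rfl (fun S hSmem => by
        rw [(Finset.mem_powersetCard.mp hSmem).2])]
      rw [Finset.sum_const, Finset.card_powersetCard, Finset.card_univ, Fintype.card_fin,
        nsmul_eq_mul]
    rw [Finset.sum_congr rfl hterm]
    have h1ε : (0:ℝ) ≤ 1 - ε := by linarith
    rw [ENNReal.ofReal_sum_of_nonneg (fun n _ => by positivity)]
    apply le_of_eq
    refine Finset.sum_congr rfl fun n _ => ?_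
    rw [ENNReal.ofReal_mul (by positivity), ENNReal.ofReal_natCast,
      ← ENNReal.ofReal_one, ← ENNReal.ofReal_sub _ hε.le, ENNReal.ofReal_pow h1ε]
end

section
/- Let (X, 𝔄) be a measurable space, 𝒞 ⊆ 𝔄 a concept class, and let 𝓗 be an unlabelled sample compression scheme of size d on (X, 𝒞) satisfying condition (M5). Let 0 < ε ≤ 1, 0 < δ ≤ 1, 0 < β < 1, and let m be an integer with m ≥ (1/(1−β)) · ((1/ε)·ln(1/δ) + d + (d/ε)·ln(1/(βε))). Then for every probability measure P on (X, 𝔄) and every C ∈ 𝒞, the m-fold product measure P^m of the set of all (a_1,…,a_m) ∈ X^m for which there exists σ ⊆ {a_1,…,a_m} with |σ| ≤ d such that P(𝓗(σ) Δ C) > ε and 𝓗(σ) ∩ {a_1,…,a_m} = C ∩ {a_1,…,a_m}, is at most δ. -/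
open Set MeasureTheory

lemma G_meas {X : Type*} [MeasurableSpace X] (d : ℕ) (H : Set X → Set X) (hM5 : M5cond d H)
    (C : Set X) (hC : MeasurableSet C) {m : ℕ} (p : Fin m → Prop) [DecidablePred p]
    (hI : Fintype.card {j : Fin m // p j} ≤ d) :
    MeasurableSet {q : ({j : Fin m // p j} → X) × X |
      q.2 ∈ symmDiff (H (Set.range q.1)) C} := by
  have hCs : MeasurableSet {q : ({j : Fin m // p j} → X) × X | q.2 ∈ C} :=
    measurable_snd hC
  have hG : MeasurableSet {q : ({j : Fin m // p j} → X) × X | q.2 ∈ H (Set.range q.1)} := by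
    rcases Nat.eq_zero_or_pos (Fintype.card {j : Fin m // p j}) with h0 | h1
    · haveI : IsEmpty {j : Fin m // p j} := Fintype.card_eq_zero_iff.mp h0
      have hre : ∀ q : ({j : Fin m // p j} → X) × X,
          Set.range q.1 = ∅ := fun q => Set.range_eq_empty _
      have : {q : ({j : Fin m // p j} → X) × X | q.2 ∈ H (Set.range q.1)} =
          Prod.snd ⁻¹' (H ∅) := by
        ext q; simp [hre q]
      rw [this]
      exact measurable_snd hM5.1
    · set k := Fintype.card {j : Fin m // p j} with hk
      let e : Fin k ≃ {j : Fin m // p j} := (Fintype.equivFin _).symm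
      let φ : ({j : Fin m // p j} → X) × X → (Fin (k + 1) → X) :=
        fun q => Fin.snoc (q.1 ∘ e) q.2
      have hφ : Measurable φ := by
        apply measurable_pi_lambda
        intro j
        induction j using Fin.lastCases with
        | last =>
          simp only [φ, Fin.snoc_last]
          exact measurable_snd
        | cast i =>
          simp only [φ, Fin.snoc_castSucc]
          exact (measurable_pi_apply _).comp measurable_fst
      have hM := hM5.2 k h1 (hk ▸ hI)
      have hpre : {q : ({j : Fin m // p j} → X) × X | q.2 ∈ H (Set.range q.1)} =
          φ ⁻¹' {x : Fin (k + 1) → X |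
            x (Fin.last k) ∈ H (Set.range fun j : Fin k => x j.castSucc)} := by
        ext q
        simp only [mem_preimage, mem_setOf_eq]
        have h1' : φ q (Fin.last k) = q.2 := Fin.snoc_last _ _
        have h2' : (fun j : Fin k => φ q j.castSucc) = q.1 ∘ e := by
          funext j; exact Fin.snoc_castSucc _ _ _
        rw [h1', h2', Set.range_comp, Set.range_eq_univ.mpr e.surjective, Set.image_univ]
      rw [hpre]
      exact hM.preimage hφ
  have : {q : ({j : Fin m // p j} → X) × X | q.2 ∈ symmDiff (H (Set.range q.1)) C} =
      ({q : ({j : Fin m // p j} → X) × X | q.2 ∈ H (Set.range q.1)} \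
        {q | q.2 ∈ C}) ∪
      ({q : ({j : Fin m // p j} → X) × X | q.2 ∈ C} \
        {q | q.2 ∈ H (Set.range q.1)}) := by
    ext q
    simp only [Set.mem_setOf_eq, Set.mem_union, Set.mem_diff, Set.mem_symmDiff]
  rw [this]
  exact (hG.diff hCs).union (hCs.diff hG)

lemma EI_bound {X : Type*} [MeasurableSpace X] (d : ℕ) (H : Set X → Set X) (hM5 : M5cond d H)
    (C : Set X) (hC : MeasurableSet C) (ε : ℝ) (hε : 0 < ε)
    (P : Measure X) [IsProbabilityMeasure P] {m : ℕ} (p : Fin m → Prop) [DecidablePred p]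
    (hI : Fintype.card {j : Fin m // p j} ≤ d) :
    (Measure.pi fun _ : Fin m => P)
      {a : Fin m → X | ENNReal.ofReal ε < P (symmDiff (H (a '' {j | p j})) C) ∧
        ∀ j, ¬ p j → a j ∉ symmDiff (H (a '' {j | p j})) C} ≤
      ENNReal.ofReal (1 - ε) ^ (m - Fintype.card {j : Fin m // p j}) := by
  classical
  let T := MeasurableEquiv.piEquivPiSubtypeProd (fun _ : Fin m => X) p
  let D : ({j : Fin m // p j} → X) → Set X := fun b => symmDiff (H (Set.range b)) C
  have hG : MeasurableSet {q : ({j : Fin m // p j} → X) × X | q.2 ∈ D q.1} :=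
    G_meas d H hM5 C hC p hI
  set F : Set (({j : Fin m // p j} → X) × ({j : Fin m // ¬ p j} → X)) :=
    {bc | ENNReal.ofReal ε < P (D bc.1) ∧ ∀ j : {j : Fin m // ¬ p j}, bc.2 j ∉ D bc.1}
    with hF_def
  have hDmk : ∀ b : {j : Fin m // p j} → X,
      Prod.mk b ⁻¹' {q : ({j : Fin m // p j} → X) × X | q.2 ∈ D q.1} = D b := by
    intro b; ext y; simp
  have hPD : Measurable fun b : {j : Fin m // p j} → X => P (D b) := by
    have h := measurable_measure_prodMk_left (ν := P) hG
    simpa only [hDmk] using h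
  have hB : MeasurableSet {b : {j : Fin m // p j} → X | ENNReal.ofReal ε < P (D b)} :=
    measurableSet_lt measurable_const hPD
  have hF : MeasurableSet F := by
    have : F = (Prod.fst ⁻¹' {b : {j : Fin m // p j} → X | ENNReal.ofReal ε < P (D b)}) ∩
        ⋂ j : {j : Fin m // ¬ p j},
          (fun bc : ({j : Fin m // p j} → X) × ({j : Fin m // ¬ p j} → X) =>
            (bc.1, bc.2 j)) ⁻¹' {q : ({j : Fin m // p j} → X) × X | q.2 ∈ D q.1}ᶜ := by
      ext bc
      simp only [hF_def, Set.mem_setOf_eq, Set.mem_inter_iff, Set.mem_preimage,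
        Set.mem_iInter, Set.mem_compl_iff]
    rw [this]
    exact (hB.preimage measurable_fst).inter (MeasurableSet.iInter fun j =>
      (hG.compl).preimage (measurable_fst.prodMk ((measurable_pi_apply j).comp measurable_snd)))
  have hTa1 : ∀ a : Fin m → X, (T a).1 = fun j : {j : Fin m // p j} => a j := fun a => rfl
  have hTa2 : ∀ a : Fin m → X, (T a).2 = fun j : {j : Fin m // ¬ p j} => a j := fun a => rfl
  have key : ∀ a : Fin m → X,
      D (fun j : {j : Fin m // p j} => a j) = symmDiff (H (a '' {j | p j})) C := by
    intro a
    have : Set.range (fun j : {j : Fin m // p j} => a j) = a '' {j | p j} := by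
      ext x
      simp only [Set.mem_range, Set.mem_image, Set.mem_setOf_eq, Subtype.exists]
      constructor
      · rintro ⟨j, hj, rfl⟩; exact ⟨j, hj, rfl⟩
      · rintro ⟨j, hj, rfl⟩; exact ⟨j, hj, rfl⟩
    simp only [D, this]
  have hEq : {a : Fin m → X | ENNReal.ofReal ε < P (symmDiff (H (a '' {j | p j})) C) ∧
      ∀ j, ¬ p j → a j ∉ symmDiff (H (a '' {j | p j})) C} ⊆ T ⁻¹' F := by
    intro a ha
    obtain ⟨h1, h2⟩ := ha
    have m1 : ENNReal.ofReal ε < P (D (T a).1) := by rw [hTa1 a, key a]; exact h1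
    have m2 : ∀ j : {j : Fin m // ¬ p j}, (T a).2 j ∉ D (T a).1 := by
      intro j
      rw [hTa1 a, hTa2 a, key a]
      exact h2 j j.2
    exact ⟨m1, m2⟩
  have hMP := measurePreserving_piEquivPiSubtypeProd (fun _ : Fin m => P) p
  have hμ := hMP.measure_preimage (s := F) hF.nullMeasurableSet
  refine le_trans (measure_mono hEq) (le_trans (le_of_eq hμ) ?_)
  rw [Measure.prod_apply hF]
  have hsec : ∀ b : {j : Fin m // p j} → X,
      (Measure.pi fun _ : {j : Fin m // ¬ p j} => P) (Prod.mk b ⁻¹' F) ≤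
        ENNReal.ofReal (1 - ε) ^ (m - Fintype.card {j : Fin m // p j}) := by
    intro b
    by_cases hb : ENNReal.ofReal ε < P (D b)
    · have hDb : MeasurableSet (D b) := by
        have := hG.preimage (measurable_prodMk_left (x := b))
        rwa [hDmk b] at this
      have hsec1 : Prod.mk b ⁻¹' F =
          Set.pi Set.univ (fun _ : {j : Fin m // ¬ p j} => (D b)ᶜ) := by
        ext c
        simp only [hF_def, Set.mem_preimage, Set.mem_setOf_eq, Set.mem_pi, Set.mem_univ,
          Set.mem_compl_iff, forall_const, hb, true_and]
      rw [hsec1, Measure.pi_pi]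
      have hq : P ((D b)ᶜ) ≤ ENNReal.ofReal (1 - ε) := by
        rw [prob_compl_eq_one_sub hDb]
        calc 1 - P (D b) ≤ 1 - ENNReal.ofReal ε := tsub_le_tsub_left hb.le 1
          _ = ENNReal.ofReal (1 - ε) := by
              rw [ENNReal.ofReal_sub _ hε.le, ENNReal.ofReal_one]
      have hcard : Fintype.card {j : Fin m // ¬ p j} = m - Fintype.card {j : Fin m // p j} := by
        rw [Fintype.card_subtype_compl, Fintype.card_fin]
      calc ∏ _j : {j : Fin m // ¬ p j}, P ((D b)ᶜ)
          ≤ ∏ _j : {j : Fin m // ¬ p j}, ENNReal.ofReal (1 - ε) :=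
            Finset.prod_le_prod' fun _ _ => hq
        _ = ENNReal.ofReal (1 - ε) ^ (m - Fintype.card {j : Fin m // p j}) := by
            rw [Finset.prod_const, Finset.card_univ, hcard]
    · have : Prod.mk b ⁻¹' F = ∅ := by
        ext c
        simp only [hF_def, Set.mem_preimage, Set.mem_setOf_eq, Set.mem_empty_iff_false,
          iff_false, not_and]
        intro h
        exact absurd h hb
      rw [this]
      simp
  refine le_trans (lintegral_mono hsec) ?_
  rw [lintegral_const, measure_univ, mul_one]

open Finset in
lemma count_aux (m d : ℕ) (hd : 1 ≤ d) (hdm : d ≤ m) :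
    ((univ.filter fun I : Finset (Fin m) => I.card ≤ d).card : ℝ) ≤
      Real.exp d * ((m : ℝ) / d) ^ d := by
  have hd0 : (0:ℝ) < d := by exact_mod_cast hd
  have hdm' : (d:ℝ) ≤ m := by exact_mod_cast hdm
  have hm0 : (0:ℝ) < m := lt_of_lt_of_le hd0 hdm'
  set x : ℝ := (d : ℝ) / m with hx
  have hx0 : 0 < x := div_pos hd0 hm0
  have hx1 : x ≤ 1 := by rw [div_le_one hm0]; exact_mod_cast hdm
  have key : ((univ.filter fun I : Finset (Fin m) => I.card ≤ d).card : ℝ) * x ^ d ≤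
      (x + 1) ^ m := by
    have h1 : ((univ.filter fun I : Finset (Fin m) => I.card ≤ d).card : ℝ) * x ^ d =
        ∑ I ∈ univ.filter fun I : Finset (Fin m) => I.card ≤ d, x ^ d := by
      rw [Finset.sum_const, nsmul_eq_mul]
    have h2 : ∀ I ∈ univ.filter fun I : Finset (Fin m) => I.card ≤ d,
        x ^ d ≤ x ^ I.card := by
      intro I hI
      simp only [mem_filter] at hI
      exact pow_le_pow_of_le_one hx0.le hx1 hI.2
    have h3 : (∑ I ∈ univ.filter fun I : Finset (Fin m) => I.card ≤ d, x ^ d) ≤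
        ∑ I ∈ univ.filter fun I : Finset (Fin m) => I.card ≤ d, x ^ I.card :=
      Finset.sum_le_sum h2
    have h4 : (∑ I ∈ univ.filter fun I : Finset (Fin m) => I.card ≤ d, x ^ I.card) ≤
        ∑ I : Finset (Fin m), x ^ I.card := by
      apply Finset.sum_le_sum_of_subset_of_nonneg (filter_subset _ _)
      intro I _ _; positivity
    have h5 : (∑ I : Finset (Fin m), x ^ I.card) = (x + 1) ^ m := by
      have := Finset.prod_add (fun _ : Fin m => x) (fun _ : Fin m => (1:ℝ)) univ
      rw [Finset.prod_const, Finset.card_univ, Fintype.card_fin] at this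
      rw [this, Finset.powerset_univ]
      apply Finset.sum_congr rfl
      intro I _
      simp
    linarith
  have hexp : (x + 1) ^ m ≤ Real.exp d := by
    have h1 : x + 1 ≤ Real.exp x := Real.add_one_le_exp x
    have h2 : (x + 1) ^ m ≤ Real.exp x ^ m := by
      apply pow_le_pow_left₀ (by linarith) h1 m
    rw [← Real.exp_nat_mul] at h2
    have hmx : (m : ℝ) * x = d := by rw [hx]; field_simp
    rwa [hmx] at h2
  -- combine
  have hxd : 0 < x ^ d := pow_pos hx0 d
  rw [← le_div_iff₀ hxd] at key
  calc ((univ.filter fun I : Finset (Fin m) => I.card ≤ d).card : ℝ)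
      ≤ (x + 1) ^ m / x ^ d := key
    _ ≤ Real.exp d / x ^ d := by gcongr
    _ = Real.exp d * ((m:ℝ)/d) ^ d := by
        rw [div_eq_mul_inv, ← inv_pow, hx, inv_div]

open Finset in
lemma real_bound (ε δ β : ℝ) (hε : 0 < ε) (hε1 : ε ≤ 1) (hδ : 0 < δ) (hδ1 : δ ≤ 1)
    (hβ0 : 0 < β) (hβ1 : β < 1) (d m : ℕ)
    (hm : (1 / (1 - β)) *
        ((1 / ε) * Real.log (1 / δ) + d + (d / ε) * Real.log (1 / (β * ε))) ≤ (m : ℝ)) :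
    ((univ.filter fun I : Finset (Fin m) => I.card ≤ d).card : ℝ) * (1 - ε) ^ (m - d) ≤ δ := by
  have hβ' : 0 < 1 - β := by linarith
  have hδ1' : 0 ≤ Real.log (1 / δ) := Real.log_nonneg (one_le_one_div hδ hδ1)
  have hβε : 0 < β * ε := mul_pos hβ0 hε
  have hβε1 : β * ε ≤ 1 := by nlinarith
  have hβεlog : 0 ≤ Real.log (1 / (β * ε)) := Real.log_nonneg (one_le_one_div hβε hβε1)
  have hA : (1 / ε) * Real.log (1 / δ) + d + (d / ε) * Real.log (1 / (β * ε)) ≤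
      (1 - β) * m := by
    have h := mul_le_mul_of_nonneg_left hm hβ'.le
    have : (1 - β) * ((1 / (1 - β)) *
        ((1 / ε) * Real.log (1 / δ) + d + (d / ε) * Real.log (1 / (β * ε)))) =
        (1 / ε) * Real.log (1 / δ) + d + (d / ε) * Real.log (1 / (β * ε)) := by
      field_simp
    linarith [this ▸ h]
  have h1me : (1 - ε) ^ (m - d) ≤ Real.exp (-(ε * (m - d : ℕ))) := by
    calc (1 - ε) ^ (m - d) ≤ Real.exp (-ε) ^ (m - d) := by
          apply pow_le_pow_left₀ (by linarith)
          have := Real.add_one_le_exp (-ε); linarith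
      _ = Real.exp (-(ε * (m - d : ℕ))) := by
          rw [← Real.exp_nat_mul]; ring_nf
  rcases Nat.eq_zero_or_pos d with hd0 | hd1
  · subst hd0
    have hcard : (univ.filter fun I : Finset (Fin m) => I.card ≤ 0) = {(∅ : Finset (Fin m))} := by
      ext I; simp [Nat.le_zero, Finset.card_eq_zero]
    rw [hcard]
    simp only [Finset.card_singleton, Nat.cast_one, one_mul, Nat.sub_zero]
    have hεm : Real.log (1 / δ) ≤ ε * m := by
      have : (1 / ε) * Real.log (1 / δ) ≤ (1 - β) * m := by simpa using hA
      have h2 : (1 - β) * m ≤ m := by nlinarith [Nat.cast_nonneg (α := ℝ) m]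
      have h3 : (1 / ε) * Real.log (1 / δ) ≤ m := le_trans this h2
      calc Real.log (1 / δ) = ε * ((1/ε) * Real.log (1/δ)) := by field_simp
        _ ≤ ε * m := by nlinarith
    calc (1 - ε) ^ (m - 0) ≤ Real.exp (-(ε * ((m - 0 : ℕ) : ℝ))) := h1me
      _ ≤ Real.exp (Real.log δ) := by
          apply Real.exp_le_exp.2
          rw [Nat.sub_zero] at *
          rw [one_div, Real.log_inv] at hεm
          linarith
      _ = δ := Real.exp_log hδ
  · -- d ≥ 1
    have hd0R : (0:ℝ) < d := by exact_mod_cast hd1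
    have hdm' : (d:ℝ) ≤ (1 - β) * m := by nlinarith [mul_nonneg (by positivity : (0:ℝ) ≤ 1/ε) hδ1', mul_nonneg (by positivity : (0:ℝ) ≤ (d:ℝ)/ε) hβεlog]
    have hmR : (0:ℝ) < m := by nlinarith
    have hdmR : (d:ℝ) < m := by nlinarith
    have hdm : d < m := by exact_mod_cast hdmR
    have hN := count_aux m d hd1 hdm.le
    have hcast : ((m - d : ℕ) : ℝ) = (m : ℝ) - d := by
      rw [Nat.cast_sub hdm.le]
    have hmd0 : (0:ℝ) < (m:ℝ)/d := by positivity
    have hpow : ((m:ℝ)/d) ^ d = Real.exp (d * Real.log ((m:ℝ)/d)) := by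
      rw [← Real.exp_log hmd0, ← Real.exp_nat_mul, Real.exp_log hmd0]
    have hlog : Real.log ((m:ℝ)/d) ≤ β * ε * m / d - 1 + Real.log (1 / (β * ε)) := by
      have h1 : Real.log (β * ε * ((m:ℝ)/d)) ≤ β * ε * ((m:ℝ)/d) - 1 :=
        Real.log_le_sub_one_of_pos (by positivity)
      have h2 : Real.log (β * ε * ((m:ℝ)/d)) = Real.log (β * ε) + Real.log ((m:ℝ)/d) :=
        Real.log_mul (ne_of_gt hβε) (ne_of_gt hmd0)
      have h3 : Real.log (1 / (β * ε)) = - Real.log (β * ε) := by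
        rw [one_div, Real.log_inv]
      have h4 : β * ε * ((m:ℝ)/d) = β * ε * m / d := by ring
      linarith [h1, h2.symm.le]
    -- exponent inequality
    have hexp : (d:ℝ) + d * Real.log ((m:ℝ)/d) - ε * ((m:ℝ) - d) ≤ Real.log δ := by
      have h5 : (d:ℝ) * Real.log ((m:ℝ)/d) ≤ β * ε * m + d * Real.log (1/(β*ε)) - d := by
        have h := mul_le_mul_of_nonneg_left hlog hd0R.le
        have e : (d:ℝ) * (β * ε * m / d - 1 + Real.log (1/(β*ε))) =
            β * ε * m + d * Real.log (1/(β*ε)) - d := by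
          field_simp
          ring
        linarith [e ▸ h]
      have h6 : Real.log (1/δ) + ε * d + d * Real.log (1/(β*ε)) ≤ ε * ((1-β) * m) := by
        have h := mul_le_mul_of_nonneg_left hA hε.le
        have e : ε * ((1 / ε) * Real.log (1 / δ) + d + (d / ε) * Real.log (1 / (β * ε))) =
            Real.log (1/δ) + ε * d + d * Real.log (1/(β*ε)) := by
          field_simp
        linarith [e ▸ h]
      have e3 : ε * ((1-β) * m) = ε * m - β * ε * m := by ring
      rw [one_div, Real.log_inv] at h6
      linarith
    calc ((univ.filter fun I : Finset (Fin m) => I.card ≤ d).card : ℝ) * (1 - ε) ^ (m - d)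
        ≤ (Real.exp d * ((m:ℝ)/d) ^ d) * Real.exp (-(ε * ((m - d : ℕ) : ℝ))) := by
          apply mul_le_mul hN h1me (pow_nonneg (by linarith) _) (by positivity)
      _ = Real.exp ((d:ℝ) + d * Real.log ((m:ℝ)/d) - ε * ((m:ℝ) - d)) := by
          rw [hpow, ← Real.exp_add, ← Real.exp_add, hcast]; ring_nf
      _ ≤ Real.exp (Real.log δ) := Real.exp_le_exp.2 hexp
      _ = δ := Real.exp_log hδ

/-- Theorem 3.2.3 (Floyd–Warmuth): a sample compression scheme of size `d` satisfying
(M5) learns with risk at most `δ` and accuracy `ε` from samples of size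
`m ≥ (1/(1-β)) · ((1/ε)·ln(1/δ) + d + (d/ε)·ln(1/(βε)))`. -/
theorem stmt_14 {X : Type*} [MeasurableSpace X] (𝒞 : Set (Set X))
    (h𝒞 : ∀ C ∈ 𝒞, MeasurableSet C) (d : ℕ) (H : Set X → Set X)
    (hH : IsUnlabelledSCS 𝒞 d H) (hM5 : M5cond d H)
    (ε δ β : ℝ) (hε : 0 < ε) (hε1 : ε ≤ 1) (hδ : 0 < δ) (hδ1 : δ ≤ 1)
    (hβ0 : 0 < β) (hβ1 : β < 1) (m : ℕ)
    (hm : (1 / (1 - β)) *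
        ((1 / ε) * Real.log (1 / δ) + d + (d / ε) * Real.log (1 / (β * ε))) ≤ (m : ℝ))
    (P : Measure X) [IsProbabilityMeasure P] (C : Set X) (hC : C ∈ 𝒞) :
    (Measure.pi fun _ : Fin m => P)
        {a : Fin m → X | ∃ σ : Set X, σ ⊆ Set.range a ∧ σ.ncard ≤ d ∧
          ENNReal.ofReal ε < P (symmDiff (H σ) C) ∧
          H σ ∩ Set.range a = C ∩ Set.range a} ≤
      ENNReal.ofReal δ := by
  classical
  set q : ENNReal := ENNReal.ofReal (1 - ε) with hq
  set s : Finset (Finset (Fin m)) :=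
    Finset.univ.filter (fun I : Finset (Fin m) => I.card ≤ d) with hs
  set E : Finset (Fin m) → Set (Fin m → X) := fun I =>
    {a : Fin m → X | ENNReal.ofReal ε < P (symmDiff (H (a '' {j | j ∈ I})) C) ∧
      ∀ j, ¬ j ∈ I → a j ∉ symmDiff (H (a '' {j | j ∈ I})) C} with hE
  -- Step 1 : inclusion into the union
  have hincl : {a : Fin m → X | ∃ σ : Set X, σ ⊆ Set.range a ∧ σ.ncard ≤ d ∧
      ENNReal.ofReal ε < P (symmDiff (H σ) C) ∧
      H σ ∩ Set.range a = C ∩ Set.range a} ⊆ ⋃ I ∈ s, E I := by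
    rintro a ⟨σ, hσsub, hσcard, hσε, hσcons⟩
    have hσfin : σ.Finite := (Set.finite_range a).subset hσsub
    have hch : ∀ x (_ : x ∈ σ), ∃ j : Fin m, a j = x := fun x hx => hσsub hx
    choose g hg using hch
    set I : Finset (Fin m) :=
      hσfin.toFinset.attach.image (fun x => g x.1 (hσfin.mem_toFinset.mp x.2)) with hI
    have hIcard : I.card ≤ d := by
      calc I.card ≤ hσfin.toFinset.attach.card := Finset.card_image_le
        _ = hσfin.toFinset.card := Finset.card_attach
        _ = σ.ncard := (Set.ncard_eq_toFinset_card σ hσfin).symm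
        _ ≤ d := hσcard
    have himg : a '' {j | j ∈ I} = σ := by
      ext y
      constructor
      · rintro ⟨j, hj, rfl⟩
        simp only [Set.mem_setOf_eq, hI, Finset.mem_image, Finset.mem_attach] at hj
        obtain ⟨x, -, rfl⟩ := hj
        rw [hg x.1 (hσfin.mem_toFinset.mp x.2)]
        exact hσfin.mem_toFinset.mp x.2
      · intro hy
        refine ⟨g y hy, ?_, hg y hy⟩
        simp only [Set.mem_setOf_eq, hI, Finset.mem_image]
        exact ⟨⟨y, hσfin.mem_toFinset.mpr hy⟩, Finset.mem_attach _ _, rfl⟩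
    have hmem : a ∈ E I := by
      rw [hE]
      refine ⟨by rw [himg]; exact hσε, ?_⟩
      intro j _ hj
      rw [himg] at hj
      have hj1 : a j ∈ Set.range a := Set.mem_range_self j
      have := Set.ext_iff.mp hσcons (a j)
      simp only [Set.mem_inter_iff, hj1, and_true] at this
      rw [Set.mem_symmDiff] at hj
      tauto
    have hIs : I ∈ s := by rw [hs]; simp [hIcard]
    exact Set.mem_biUnion hIs hmem
  -- Step 2 : union bound
  refine le_trans (measure_mono hincl) (le_trans (measure_biUnion_finset_le s E) ?_)
  -- Step 3 : individual bounds
  have hbound : ∀ I ∈ s, (Measure.pi fun _ : Fin m => P) (E I) ≤ q ^ (m - d) := by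
    intro I hImem
    have hIcard : I.card ≤ d := by simpa [hs] using hImem
    have hcardI : @Fintype.card {j : Fin m // j ∈ I} (Subtype.fintype fun j => j ∈ I)
        = I.card :=
      (@Fintype.card_congr _ _ (Subtype.fintype fun j => j ∈ I) (Finset.Subtype.fintype I)
        (Equiv.refl _)).trans (Fintype.card_coe I)
    have h1 := EI_bound d H hM5 C (h𝒞 C hC) ε hε P (fun j => j ∈ I)
      (hcardI.le.trans hIcard)
    have h2 : (Measure.pi fun _ : Fin m => P) (E I) ≤
        q ^ (m - @Fintype.card {j : Fin m // j ∈ I} (Subtype.fintype fun j => j ∈ I)) := h1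
    refine le_trans h2 ?_
    apply pow_le_pow_right_of_le_one' (ENNReal.ofReal_le_one.mpr (by linarith))
    rw [hcardI]
    exact Nat.sub_le_sub_left hIcard m
  refine le_trans (Finset.sum_le_sum hbound) ?_
  rw [Finset.sum_const, nsmul_eq_mul]
  have hfinal : (s.card : ENNReal) * q ^ (m - d) =
      ENNReal.ofReal ((s.card : ℝ) * (1 - ε) ^ (m - d)) := by
    rw [ENNReal.ofReal_mul (by positivity), ENNReal.ofReal_natCast,
      ENNReal.ofReal_pow (by linarith), hq]
  rw [hfinal]
  exact ENNReal.ofReal_le_ofReal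
    (real_bound ε δ β hε hε1 hδ hδ1 hβ0 hβ1 d m hm)
end

section
/- Let 0 < ε ≤ 1, 0 < δ ≤ 1, let m, k be positive integers, let n_0,…,n_k be natural numbers, and set n = max{n_0,…,n_k}. If there exists β with 0 < β < 1 such that m ≥ (1/(1−β)) · ((1/ε)·ln(n/δ) + k + (k/ε)·ln(1/(βε))), then Σ_{i=0}^{k} n_i·binom(m, i)·(1−ε)^{m−i} ≤ δ. -/
open Finset

/-- Lemma B.2.2: if `0 < ε ≤ 1`, `0 < δ ≤ 1`, `m, k` are positive integers,
`n = max{n_0, …, n_k}` and there is `0 < β < 1` with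
`m ≥ (1/(1-β)) · ((1/ε)·ln(n/δ) + k + (k/ε)·ln(1/(βε)))`, then
`∑_{i=0}^k n_i·binom(m, i)·(1-ε)^(m-i) ≤ δ`. -/
theorem stmt_15 (ε δ : ℝ) (m k : ℕ) (ns : ℕ → ℕ) (hε : 0 < ε) (hε1 : ε ≤ 1)
    (hδ : 0 < δ) (hδ1 : δ ≤ 1) (hm : 0 < m) (hk : 0 < k)
    (hβ : ∃ β : ℝ, 0 < β ∧ β < 1 ∧
      (1 / (1 - β)) *
          ((1 / ε) * Real.log ((((Finset.range (k + 1)).sup ns : ℕ) : ℝ) / δ) + k +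
            (k / ε) * Real.log (1 / (β * ε)))
        ≤ (m : ℝ)) :
    ∑ i ∈ Finset.range (k + 1), (ns i : ℝ) * (m.choose i : ℝ) * (1 - ε) ^ (m - i) ≤ δ := by
  set N := (Finset.range (k + 1)).sup ns with hNdef
  by_cases hN0 : N = 0
  · have hz : ∀ i ∈ Finset.range (k + 1), ns i = 0 := by
      intro i hi
      have h := Finset.le_sup (f := ns) hi
      omega
    have hzero : ∑ i ∈ Finset.range (k + 1), (ns i : ℝ) * (m.choose i : ℝ) * (1 - ε) ^ (m - i)
        = 0 := by
      apply Finset.sum_eq_zero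
      intro i hi
      rw [hz i hi]
      simp
    rw [hzero]
    exact hδ.le
  · obtain ⟨β, hβ0, hβ1, hm'⟩ := hβ
    have hN1 : (1 : ℝ) ≤ (N : ℝ) := by exact_mod_cast Nat.one_le_iff_ne_zero.2 hN0
    set x := β * ε with hxdef
    have hx0 : 0 < x := mul_pos hβ0 hε
    have hx1 : x ≤ 1 := by nlinarith
    have hβ1' : (0 : ℝ) < 1 - β := by linarith
    have hε' : (0 : ℝ) ≤ 1 - ε := by linarith
    have hlogNδ : 0 ≤ Real.log ((N : ℝ) / δ) := Real.log_nonneg (by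
      rw [le_div_iff₀ hδ]; linarith)
    have hlogx : 0 ≤ Real.log (1 / x) := Real.log_nonneg (by
      rw [le_div_iff₀ hx0]; linarith)
    have hA : (1 / ε) * Real.log ((N : ℝ) / δ) + k + (k / ε) * Real.log (1 / x)
        ≤ (1 - β) * m := by
      have h2 := mul_le_mul_of_nonneg_left hm' hβ1'.le
      calc (1 / ε) * Real.log ((N : ℝ) / δ) + k + (k / ε) * Real.log (1 / x)
          = (1 - β) * ((1 / (1 - β)) *
              ((1 / ε) * Real.log ((N : ℝ) / δ) + k + (k / ε) * Real.log (1 / x))) := by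
            field_simp
        _ ≤ (1 - β) * m := h2
    have hkm : k ≤ m := by
      have h1 : 0 ≤ (1 / ε) * Real.log ((N : ℝ) / δ) :=
        mul_nonneg (by positivity) hlogNδ
      have h2 : 0 ≤ ((k : ℝ) / ε) * Real.log (1 / x) :=
        mul_nonneg (by positivity) hlogx
      have h3 : (k : ℝ) ≤ (1 - β) * m := by linarith
      have h4 : (k : ℝ) ≤ m := by nlinarith [mul_nonneg hβ0.le (Nat.cast_nonneg m : (0:ℝ) ≤ m)]
      exact_mod_cast h4
    have hεA : Real.log ((N : ℝ) / δ) + ε * k + k * Real.log (1 / x) ≤ ε * (1 - β) * m := by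
      have h := mul_le_mul_of_nonneg_left hA hε.le
      have hεne : ε ≠ 0 := ne_of_gt hε
      calc Real.log ((N : ℝ) / δ) + ε * k + k * Real.log (1 / x)
          = ε * ((1 / ε) * Real.log ((N : ℝ) / δ) + k + (k / ε) * Real.log (1 / x)) := by
            field_simp
        _ ≤ ε * ((1 - β) * m) := h
        _ = ε * (1 - β) * m := by ring
    have key : ∀ i ∈ Finset.range (k + 1),
        (ns i : ℝ) * (m.choose i : ℝ) * (1 - ε) ^ (m - i)
          ≤ (N : ℝ) * (1 / x) ^ k * ((m.choose i : ℝ) * (x ^ i * (1 - ε) ^ (m - i))) := by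
      intro i hi
      have hns : (ns i : ℝ) ≤ (N : ℝ) := by
        exact_mod_cast Finset.le_sup (f := ns) hi
      have hik : i ≤ k := Nat.lt_succ_iff.mp (Finset.mem_range.mp hi)
      have hxik : x ^ k ≤ x ^ i := pow_le_pow_of_le_one hx0.le hx1 hik
      have h1 : (1 : ℝ) ≤ (1 / x) ^ k * x ^ i := by
        have hEq : (1 / x) ^ k * x ^ i = x ^ i / x ^ k := by
          rw [div_pow, one_pow, div_mul_eq_mul_div, one_mul]
        rw [hEq, le_div_iff₀ (by positivity)]
        linarith
      have hCp : (0 : ℝ) ≤ (m.choose i : ℝ) * (1 - ε) ^ (m - i) := by positivity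
      calc (ns i : ℝ) * (m.choose i : ℝ) * (1 - ε) ^ (m - i)
          = (ns i : ℝ) * ((m.choose i : ℝ) * (1 - ε) ^ (m - i)) := by ring
        _ ≤ ((N : ℝ) * ((1 / x) ^ k * x ^ i)) * ((m.choose i : ℝ) * (1 - ε) ^ (m - i)) := by
            apply mul_le_mul_of_nonneg_right _ hCp
            calc (ns i : ℝ) ≤ (N : ℝ) := hns
              _ ≤ (N : ℝ) * ((1 / x) ^ k * x ^ i) :=
                  le_mul_of_one_le_right (by positivity) h1
        _ = (N : ℝ) * (1 / x) ^ k * ((m.choose i : ℝ) * (x ^ i * (1 - ε) ^ (m - i))) := by ring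
    have step1 : ∑ i ∈ Finset.range (k + 1), (ns i : ℝ) * (m.choose i : ℝ) * (1 - ε) ^ (m - i)
        ≤ (N : ℝ) * (1 / x) ^ k *
            ∑ i ∈ Finset.range (m + 1), (m.choose i : ℝ) * (x ^ i * (1 - ε) ^ (m - i)) := by
      calc ∑ i ∈ Finset.range (k + 1), (ns i : ℝ) * (m.choose i : ℝ) * (1 - ε) ^ (m - i)
          ≤ ∑ i ∈ Finset.range (k + 1),
              (N : ℝ) * (1 / x) ^ k * ((m.choose i : ℝ) * (x ^ i * (1 - ε) ^ (m - i))) :=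
            Finset.sum_le_sum key
        _ = (N : ℝ) * (1 / x) ^ k *
              ∑ i ∈ Finset.range (k + 1), (m.choose i : ℝ) * (x ^ i * (1 - ε) ^ (m - i)) := by
            rw [← Finset.mul_sum]
        _ ≤ (N : ℝ) * (1 / x) ^ k *
              ∑ i ∈ Finset.range (m + 1), (m.choose i : ℝ) * (x ^ i * (1 - ε) ^ (m - i)) := by
            apply mul_le_mul_of_nonneg_left _ (by positivity)
            apply Finset.sum_le_sum_of_subset_of_nonneg
            · exact Finset.range_subset_range.2 (by omega)
            · intro i _ _
              positivity
    have binom : ∑ i ∈ Finset.range (m + 1), (m.choose i : ℝ) * (x ^ i * (1 - ε) ^ (m - i))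
        = (x + (1 - ε)) ^ m := by
      rw [add_pow]
      apply Finset.sum_congr rfl
      intro i _
      ring
    have hy0 : (0 : ℝ) ≤ x + (1 - ε) := by linarith
    have hy : x + (1 - ε) ≤ Real.exp (-(ε * (1 - β))) := by
      have h := Real.add_one_le_exp (-(ε * (1 - β)))
      nlinarith
    have hpow : (x + (1 - ε)) ^ m ≤ Real.exp (-(ε * (1 - β))) ^ m := pow_le_pow_left₀ hy0 hy m
    have hNpos : (0 : ℝ) < (N : ℝ) := by linarith
    have final : (N : ℝ) * (1 / x) ^ k * Real.exp (-(ε * (1 - β))) ^ m ≤ δ := by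
      have e1 : (N : ℝ) = Real.exp (Real.log (N : ℝ)) := (Real.exp_log hNpos).symm
      have e2 : (1 / x) ^ k = Real.exp ((k : ℝ) * Real.log (1 / x)) := by
        rw [← Real.log_pow, Real.exp_log (show (0:ℝ) < (1 / x) ^ k by positivity)]
      have e3 : Real.exp (-(ε * (1 - β))) ^ m = Real.exp ((m : ℝ) * -(ε * (1 - β))) := by
        rw [← Real.exp_nat_mul]
      rw [e1, e2, e3, ← Real.exp_add, ← Real.exp_add, ← Real.exp_log hδ]
      apply Real.exp_le_exp.2
      have hld : Real.log ((N : ℝ) / δ) = Real.log (N : ℝ) - Real.log δ :=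
        Real.log_div (by positivity) (ne_of_gt hδ)
      rw [hld] at hεA
      have hεk : 0 ≤ ε * (k : ℝ) := by positivity
      linarith [hεA, hεk]
    calc ∑ i ∈ Finset.range (k + 1), (ns i : ℝ) * (m.choose i : ℝ) * (1 - ε) ^ (m - i)
        ≤ (N : ℝ) * (1 / x) ^ k *
            ∑ i ∈ Finset.range (m + 1), (m.choose i : ℝ) * (x ^ i * (1 - ε) ^ (m - i)) := step1
      _ = (N : ℝ) * (1 / x) ^ k * (x + (1 - ε)) ^ m := by rw [binom]
      _ ≤ (N : ℝ) * (1 / x) ^ k * Real.exp (-(ε * (1 - β))) ^ m :=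
          mul_le_mul_of_nonneg_left hpow (by positivity)
      _ ≤ δ := final
end

section
/- Let X be a set and let 𝒞 ⊆ 2^X be d-maximal for some d ∈ ℕ. Then the set of indicator functions {χ_C : C ∈ 𝒞} is a closed subset of ℝ^X in the product topology (topology of pointwise convergence); equivalently, if a net of indicator functions of members of 𝒞 converges pointwise to a real-valued function f, then f = χ_C for some C ∈ 𝒞. -/
open Set MeasureTheory Filter

/-- The concept class `𝒞` is `d`-maximal: `vc(𝒞) = d` and adding any new concept
raises the VC dimension above `d`. -/
def IsMaximal {X : Type*} (𝒞 : Set (Set X)) (d : ℕ) : Prop :=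
  vcDim 𝒞 = (d : ℕ∞) ∧ ∀ D : Set X, D ∉ 𝒞 → (d : ℕ∞) < vcDim (𝒞 ∪ {D})

/-- Lemma 4.1.3 (Dudley): if `𝒞` is `d`-maximal then the set of indicator functions of
members of `𝒞` is closed in `ℝ^X` with the topology of pointwise convergence. -/
theorem stmt_16 {X : Type*} (𝒞 : Set (Set X)) (d : ℕ) (h : IsMaximal 𝒞 d) :
    IsClosed {f : X → ℝ | ∃ C ∈ 𝒞, f = C.indicator fun _ => (1 : ℝ)} := by
  set S := {f : X → ℝ | ∃ C ∈ 𝒞, f = C.indicator fun _ => (1 : ℝ)} with hS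
  apply isClosed_of_closure_subset
  intro f hf
  -- Step 1: f is {0,1}-valued
  have h01 : ∀ x, f x = 0 ∨ f x = 1 := by
    intro x
    have hcl : IsClosed {g : X → ℝ | g x ∈ ({0, 1} : Set ℝ)} := by
      have hfin : IsClosed ({0, 1} : Set ℝ) :=
        ((Set.finite_singleton (1:ℝ)).insert 0).isClosed
      exact hfin.preimage (continuous_apply x)
    have hsub : S ⊆ {g | g x ∈ ({0, 1} : Set ℝ)} := by
      rintro g ⟨C, hC, rfl⟩
      by_cases hx : x ∈ C <;> simp [Set.indicator, hx]
    have := closure_minimal hsub hcl hf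
    simpa using this
  set D := {x | f x = 1} with hD
  have hfD : f = D.indicator fun _ => (1 : ℝ) := by
    funext x
    by_cases hx : f x = 1
    · simp [Set.indicator, hD, hx]
    · have h0 : f x = 0 := (h01 x).resolve_right hx
      simp [Set.indicator, hD, hx, h0]
  -- Step 2: on every finite set, D agrees with some member of 𝒞
  have key : ∀ A : Finset X, ∃ C ∈ 𝒞, C ∩ ↑A = D ∩ ↑A := by
    intro A
    have hU : IsOpen {g : X → ℝ | ∀ x ∈ A, |g x - f x| < 1/2} := by
      have heq : {g : X → ℝ | ∀ x ∈ A, |g x - f x| < 1/2}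
          = ⋂ x ∈ A, {g : X → ℝ | |g x - f x| < 1/2} := by ext g; simp
      rw [heq]
      apply isOpen_biInter_finset
      intro x _
      have hc : Continuous fun g : X → ℝ => |g x - f x| :=
        ((continuous_apply x).sub continuous_const).abs
      exact isOpen_lt hc continuous_const
    have hfU : f ∈ {g : X → ℝ | ∀ x ∈ A, |g x - f x| < 1/2} := by
      intro x _
      simp only [sub_self, abs_zero]
      norm_num
    obtain ⟨g, hgU, hgS⟩ := _root_.mem_closure_iff.mp hf _ hU hfU
    obtain ⟨C, hC, rfl⟩ := hgS
    refine ⟨C, hC, ?_⟩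
    ext x
    simp only [Set.mem_inter_iff, Finset.mem_coe]
    constructor
    · rintro ⟨hxC, hxA⟩
      refine ⟨?_, hxA⟩
      have hlt := hgU x hxA
      simp only [Set.indicator_of_mem hxC] at hlt
      rcases h01 x with h0 | h1
      · rw [h0] at hlt; norm_num at hlt
      · exact h1
    · rintro ⟨hxD, hxA⟩
      refine ⟨?_, hxA⟩
      by_contra hxC
      have hlt := hgU x hxA
      have hfx : f x = 1 := hxD
      simp only [Set.indicator_of_notMem hxC, hfx] at hlt
      norm_num at hlt
  -- Step 3: adding D doesn't raise the VC dimension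
  have hle : vcDim (𝒞 ∪ {D}) ≤ (d : ℕ∞) := by
    rw [← h.1]
    unfold vcDim
    apply iSup_le; intro A; apply iSup_le; intro hA
    have hA' : Shatters 𝒞 ↑A := by
      unfold Shatters at hA ⊢
      apply Set.Subset.antisymm
      · rintro B ⟨C, _, rfl⟩
        exact Set.inter_subset_right
      · intro B hB
        rw [← hA] at hB
        obtain ⟨E, hE, rfl⟩ := hB
        rcases hE with hE | hE
        · exact ⟨E, hE, rfl⟩
        · rw [Set.mem_singleton_iff] at hE; subst hE
          rcases key A with ⟨C, hC, hCA⟩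
          exact ⟨C, hC, hCA⟩
    exact le_iSup₂ (f := fun (A : Finset X) (_ : Shatters 𝒞 ↑A) => (A.card : ℕ∞)) A hA'
  by_cases hDC : D ∈ 𝒞
  · exact ⟨D, hDC, hfD⟩
  · exact absurd hle (not_le.mpr (h.2 D hDC))
end
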